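/- arXiv:2303.12476 — 4 statements merged into one kernel-verified Lean document; each statement's English description precedes it below -/
import Mathlib

section
/- Let β ∈ ℝ and let μ be an ergodic e^{-βc}-conformal nonzero Radon measure on Y_u. Then the following are equivalent: (1) there exists a nonzero G-invariant Radon measure on Y_u mutually absolutely continuous with μ; (2) there exists a measurable function φ : X_u → ℂ, not μ-almost everywhere zero, square-integrable on X_u \ (X_u + a) for every a ∈ P, such that for every a ∈ P, φ(A + a) = e^{βc(a)/2} φ(A) for μ-almost every A ∈ X_u (i.e. the isometric representation V^{μ} is 1-conformal). -/
/-!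
STATEMENT 12. Let β ∈ ℝ and μ an ergodic e^{-βc}-conformal nonzero Radon measure
on Y_u. TFAE: (1) there is a nonzero G-invariant Radon measure on Y_u mutually
absolutely continuous with μ; (2) there is a measurable φ : X_u → ℂ, not μ-a.e.
zero, square-integrable on X_u \ (X_u + a) for every a ∈ P, with
φ(A + a) = e^{βc(a)/2} φ(A) for μ-a.e. A ∈ X_u, for every a ∈ P (i.e. V^{μ}
is 1-conformal).
-/

open MeasureTheory Real Set
open scoped ENNReal NNReal
set_option linter.unusedSectionVars false
set_option linter.unusedVariables false
set_option maxHeartbeats 1000000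

namespace Stmt12

variable {G : Type}

def transl [AddCommGroup G] (s : G) (A : G → Bool) : G → Bool := fun g => A (g - s)

def Ybar [AddCommGroup G] (P : Set G) : Set (G → Bool) :=
  {A | (∃ g, A g = true) ∧ ∀ g : G, ∀ p ∈ P, A g = true → A (g - p) = true}

def allG (G : Type) : G → Bool := fun _ => true

def Yu [AddCommGroup G] (P : Set G) : Set (G → Bool) := {A ∈ Ybar P | A ≠ allG G}

def Xu [AddCommGroup G] (P : Set G) : Set (G → Bool) := {A ∈ Yu P | A 0 = true}

def XuAdd [AddCommGroup G] (P : Set G) (a : G) : Set (G → Bool) := transl a '' Xu P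

def ConcYu [AddCommGroup G] (P : Set G) (μ : Measure (G → Bool)) : Prop :=
  μ ((Yu P)ᶜ) = 0

def IsRadonYu [AddCommGroup G] (P : Set G) (μ : Measure (G → Bool)) : Prop :=
  ∀ K : Set (G → Bool), IsCompact K → K ⊆ Yu P → μ K < ⊤

def IsConformal [AddCommGroup G] (c : G → ℝ) (β : ℝ) (μ : Measure (G → Bool)) : Prop :=
  ∀ s : G, ∀ E : Set (G → Bool), MeasurableSet E →
    μ (transl s '' E) = ENNReal.ofReal (Real.exp (-(β * c s))) * μ E

def IsInvariantG [AddCommGroup G] (ν : Measure (G → Bool)) : Prop :=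
  ∀ s : G, ∀ E : Set (G → Bool), MeasurableSet E → ν (transl s '' E) = ν E

def IsErgodicG [AddCommGroup G] (μ : Measure (G → Bool)) : Prop :=
  ∀ E : Set (G → Bool), MeasurableSet E → (∀ s : G, transl s '' E = E) →
    μ E = 0 ∨ μ Eᶜ = 0

section Lemmas
variable [AddCommGroup G]

@[simp] lemma transl_apply (s : G) (A : G → Bool) (g : G) : transl s A g = A (g - s) := rfl

lemma transl_transl (s t : G) (A : G → Bool) : transl s (transl t A) = transl (s + t) A := by
  funext g; simp [transl, sub_sub]

@[simp] lemma transl_zero (A : G → Bool) : transl 0 A = A := by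
  funext g; simp [transl]

lemma transl_cancel (s : G) (A : G → Bool) : transl s (transl (-s) A) = A := by
  rw [transl_transl]; simp

lemma transl_cancel' (s : G) (A : G → Bool) : transl (-s) (transl s A) = A := by
  rw [transl_transl]; simp

lemma measurable_transl (s : G) : Measurable (transl s : (G → Bool) → (G → Bool)) :=
  measurable_pi_lambda _ fun g => measurable_pi_apply (g - s)

lemma continuous_transl (s : G) : Continuous (transl s : (G → Bool) → (G → Bool)) :=
  continuous_pi fun g => continuous_apply (g - s)

lemma image_transl (s : G) (E : Set (G → Bool)) :
    transl s '' E = transl (-s) ⁻¹' E := by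
  ext A
  constructor
  · rintro ⟨B, hB, rfl⟩
    simpa [Set.mem_preimage, transl_cancel'] using hB
  · intro hA
    exact ⟨transl (-s) A, hA, transl_cancel s A⟩

lemma measurableSet_image_transl (s : G) {E : Set (G → Bool)} (hE : MeasurableSet E) :
    MeasurableSet (transl s '' E) := by
  rw [image_transl]; exact measurable_transl _ hE

lemma mem_image_transl {s : G} {E : Set (G → Bool)} {A : G → Bool} :
    A ∈ transl s '' E ↔ transl (-s) A ∈ E := by
  rw [image_transl]; rfl

end Lemmas

section SetLem
variable [AddCommGroup G] [Countable G] (P : Set G)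

/-- hereditary sets -/
def Her : Set (G → Bool) := {A | ∀ g : G, ∀ p ∈ P, A g = true → A (g - p) = true}

lemma measurableSet_eval (g : G) (b : Bool) : MeasurableSet {A : G → Bool | A g = b} := by
  have : {A : G → Bool | A g = b} = (fun A : G → Bool => A g) ⁻¹' {b} := rfl
  rw [this]
  exact (measurable_pi_apply g) (measurableSet_singleton b)

lemma isClosed_eval (g : G) (b : Bool) : IsClosed {A : G → Bool | A g = b} := by
  have : {A : G → Bool | A g = b} = (fun A : G → Bool => A g) ⁻¹' {b} := rfl
  rw [this]
  exact IsClosed.preimage (continuous_apply g) (isClosed_singleton)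

lemma her_eq : Her P = ⋂ (g : G), ⋂ (p ∈ P), ({A : G → Bool | A g = false} ∪ {A | A (g - p) = true}) := by
  ext A
  simp only [Her, Set.mem_iInter, Set.mem_setOf_eq, Set.mem_union]
  constructor
  · intro h g p hp
    rcases Bool.eq_false_or_eq_true (A g) with h'|h'
    · exact Or.inr (h g p hp h')
    · exact Or.inl h'
  · intro h g p hp hg
    rcases h g p hp with h'|h'
    · rw [hg] at h'; exact absurd h' (by simp)
    · exact h'

lemma measurableSet_her : MeasurableSet (Her P) := by
  rw [her_eq]
  exact MeasurableSet.iInter fun g => MeasurableSet.biInter (Set.to_countable P)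
    (fun p _ => (measurableSet_eval (g) false).union (measurableSet_eval (g - p) true))

lemma isClosed_her : IsClosed (Her P) := by
  rw [her_eq]
  exact isClosed_iInter fun g => isClosed_biInter
    (fun p _ => (isClosed_eval g false).union (isClosed_eval (g - p) true))

lemma measurableSet_Ybar : MeasurableSet (Ybar P) := by
  have : Ybar P = (⋃ g : G, {A : G → Bool | A g = true}) ∩ Her P := by
    ext A; simp [Ybar, Her, And.comm]
  rw [this]
  exact (MeasurableSet.iUnion fun g => measurableSet_eval g true).inter (measurableSet_her P)

lemma Yu_eq : Yu P = Ybar P ∩ {allG G}ᶜ := rfl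

lemma measurableSet_Yu : MeasurableSet (Yu P) := by
  rw [Yu_eq]
  exact (measurableSet_Ybar P).inter (MeasurableSet.singleton _).compl

lemma measurableSet_Xu : MeasurableSet (Xu P) :=
  (measurableSet_Yu P).inter (measurableSet_eval 0 true)

lemma measurableSet_XuAdd (a : G) : MeasurableSet (XuAdd P a) :=
  measurableSet_image_transl a (measurableSet_Xu P)

lemma allG_ne_iff (A : G → Bool) : A ≠ allG G ↔ ∃ g, A g = false := by
  constructor
  · intro h
    by_contra h'
    push_neg at h'
    exact h (funext fun g => by
      have := h' g; revert this; cases A g <;> simp [allG])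
  · rintro ⟨g, hg⟩ h
    rw [h] at hg; simp [allG] at hg

lemma transl_mem_Yu {A : G → Bool} (hA : A ∈ Yu P) (s : G) : transl s A ∈ Yu P := by
  obtain ⟨⟨⟨g, hg⟩, hher⟩, hne⟩ := hA
  refine ⟨⟨⟨g + s, by simpa [transl] using hg⟩, ?_⟩, ?_⟩
  · intro g p hp h
    simp only [transl] at h ⊢
    have := hher (g - s) p hp h
    rwa [sub_right_comm] at this
  · rw [allG_ne_iff] at hne ⊢
    obtain ⟨g', hg'⟩ := hne
    exact ⟨g' + s, by simpa [transl] using hg'⟩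

lemma transl_mem_Yu_iff {A : G → Bool} (s : G) : transl s A ∈ Yu P ↔ A ∈ Yu P := by
  constructor
  · intro h
    have := transl_mem_Yu P h (-s)
    rwa [transl_cancel'] at this
  · exact fun h => transl_mem_Yu P h s

end SetLem

section SetLem2
variable [AddCommGroup G] [Countable G] (P : Set G)

def Sset (a : G) : Set (G → Bool) :=
  Her P ∩ {A | A 0 = true} ∩ {A | A a = false}

lemma mem_Xu_iff (A : G → Bool) :
    A ∈ Xu P ↔ A ∈ Her P ∧ A 0 = true ∧ A ≠ allG G := by
  constructor
  · rintro ⟨⟨⟨_, hher⟩, hne⟩, h0⟩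
    exact ⟨hher, h0, hne⟩
  · rintro ⟨hher, h0, hne⟩
    exact ⟨⟨⟨⟨0, h0⟩, hher⟩, hne⟩, h0⟩

lemma Sset_subset_Yu (a : G) : Sset P a ⊆ Yu P := by
  rintro A ⟨⟨hher, h0⟩, ha⟩
  refine ⟨⟨⟨0, h0⟩, hher⟩, ?_⟩
  rw [allG_ne_iff]
  exact ⟨a, ha⟩

lemma isClosed_Sset (a : G) : IsClosed (Sset P a) :=
  ((isClosed_her P).inter (isClosed_eval 0 true)).inter (isClosed_eval a false)

lemma isCompact_Sset (a : G) : IsCompact (Sset P a) :=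
  (isClosed_Sset P a).isCompact

lemma measurableSet_Sset (a : G) : MeasurableSet (Sset P a) :=
  ((measurableSet_her P).inter (measurableSet_eval 0 true)).inter (measurableSet_eval a false)

lemma Xu_diff_eq (a : G) (ha : a ∈ P) : Xu P \ XuAdd P a = Sset P a := by
  ext A
  constructor
  · rintro ⟨hX, hnX⟩
    rw [mem_Xu_iff] at hX
    obtain ⟨hher, h0, hne⟩ := hX
    refine ⟨⟨hher, h0⟩, ?_⟩
    by_contra hfalse
    have ha' : A a = true := by simpa using hfalse
    apply hnX
    rw [XuAdd, mem_image_transl, mem_Xu_iff]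
    refine ⟨?_, ?_, ?_⟩
    · intro g p hp h
      rw [transl_apply] at h ⊢
      have := hher (g - -a) p hp h
      rwa [sub_right_comm] at this
    · rw [transl_apply, zero_sub, neg_neg]; exact ha'
    · rw [allG_ne_iff] at hne ⊢
      obtain ⟨g, hg⟩ := hne
      exact ⟨g + -a, by rw [transl_apply, add_sub_cancel_right]; exact hg⟩
  · rintro ⟨⟨hher, h0⟩, ha'⟩
    constructor
    · rw [mem_Xu_iff]
      refine ⟨hher, h0, ?_⟩
      rw [allG_ne_iff]; exact ⟨a, ha'⟩
    · intro hmem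
      rw [XuAdd, mem_image_transl, mem_Xu_iff] at hmem
      have := hmem.2.1
      rw [transl_apply, zero_sub, neg_neg] at this
      have hb' : A a = false := ha'
      rw [this] at hb'; exact absurd hb' (by simp)

lemma Sset_subset_Sset {b a : G} (hab : a - b ∈ P) : Sset P b ⊆ Sset P a := by
  rintro A ⟨⟨hher, h0⟩, hb⟩
  refine ⟨⟨hher, h0⟩, ?_⟩
  by_contra hfa
  have ha' : A a = true := by simpa using hfa
  have := hher a (a - b) hab ha'
  rw [sub_sub_cancel] at this
  have hb' : A b = false := hb
  rw [this] at hb'; exact absurd hb' (by simp)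

lemma nsmul_mem_P (hP0 : (0:G) ∈ P) (hPadd : ∀ a ∈ P, ∀ b ∈ P, a + b ∈ P)
    {a : G} (ha : a ∈ P) : ∀ n : ℕ, n • a ∈ P := by
  intro n
  induction n with
  | zero => simpa using hP0
  | succ n ih =>
    have : (n + 1) • a = n • a + a := by rw [add_smul, one_smul]
    rw [this]
    exact hPadd _ ih _ ha

lemma Yu_eq_iUnion : Yu P = ⋃ g : G, transl g '' Xu P := by
  ext A
  constructor
  · intro hA
    obtain ⟨g, hg⟩ := hA.1.1
    refine Set.mem_iUnion.2 ⟨g, ?_⟩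
    rw [mem_image_transl]
    refine ⟨(transl_mem_Yu_iff P (-g)).2 hA, ?_⟩
    rw [transl_apply, zero_sub, neg_neg]; exact hg
  · intro hA
    obtain ⟨g, hg⟩ := Set.mem_iUnion.1 hA
    rw [mem_image_transl] at hg
    exact (transl_mem_Yu_iff P (-g)).1 hg.1
end SetLem2

section MeasLem
variable [AddCommGroup G] [Countable G] (P : Set G)
variable (c : G → ℝ) (β : ℝ) (μ : Measure (G → Bool))

lemma c_zero (hc : ∀ s t : G, c (s + t) = c s + c t) : c 0 = 0 := by
  have := hc 0 0; simp at this; linarith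

lemma c_neg (hc : ∀ s t : G, c (s + t) = c s + c t) (s : G) : c (-s) = - c s := by
  have := hc s (-s)
  rw [add_neg_cancel, c_zero c hc] at this
  linarith

/-- expβ s = e^{β c s} as ENNReal -/
noncomputable def eβ (s : G) : ℝ≥0∞ := ENNReal.ofReal (Real.exp (β * c s))

lemma eβ_ne_zero (s : G) : eβ c β s ≠ 0 := by
  simp [eβ, Real.exp_pos]

lemma eβ_ne_top (s : G) : eβ c β s ≠ ⊤ := ENNReal.ofReal_ne_top

lemma eβ_mul (hc : ∀ s t : G, c (s + t) = c s + c t) (s t : G) : eβ c β (s + t) = eβ c β s * eβ c β t := by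
  rw [eβ, eβ, eβ, hc, mul_add, Real.exp_add,
    ENNReal.ofReal_mul (Real.exp_pos _).le]

lemma eβ_neg_mul (hc : ∀ s t : G, c (s + t) = c s + c t) (s : G) : eβ c β (-s) * eβ c β s = 1 := by
  rw [← eβ_mul c β hc, neg_add_cancel, eβ, c_zero c hc]
  simp

lemma conf_image (hc : ∀ s t : G, c (s + t) = c s + c t) (hconf : IsConformal c β μ) (s : G) {E : Set (G → Bool)} (hE : MeasurableSet E) :
    μ (transl s '' E) = eβ c β (-s) * μ E := by
  rw [hconf s E hE, eβ, c_neg c hc s, mul_neg]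

lemma conf_preimage (hc : ∀ s t : G, c (s + t) = c s + c t) (hconf : IsConformal c β μ) (s : G) {E : Set (G → Bool)} (hE : MeasurableSet E) :
    μ (transl s ⁻¹' E) = eβ c β s * μ E := by
  have : transl s ⁻¹' E = transl (-s) '' E := by
    rw [image_transl, neg_neg]
  rw [this, conf_image c β μ hc hconf (-s) hE, neg_neg]

lemma map_transl (hc : ∀ s t : G, c (s + t) = c s + c t) (hconf : IsConformal c β μ) (s : G) : μ.map (transl s) = eβ c β s • μ := by
  ext E hE
  rw [Measure.map_apply (measurable_transl s) hE, Measure.smul_apply, smul_eq_mul,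
    conf_preimage c β μ hc hconf s hE]

lemma lintegral_comp_transl (hc : ∀ s t : G, c (s + t) = c s + c t) (hconf : IsConformal c β μ) (s : G) {f : (G → Bool) → ℝ≥0∞} (hf : Measurable f) :
    ∫⁻ A, f (transl s A) ∂μ = eβ c β s * ∫⁻ A, f A ∂μ := by
  rw [← lintegral_map hf (measurable_transl s), map_transl c β μ hc hconf s,
    lintegral_smul_measure, smul_eq_mul]

lemma setLintegral_comp_transl (hc : ∀ s t : G, c (s + t) = c s + c t) (hconf : IsConformal c β μ) (s : G) {f : (G → Bool) → ℝ≥0∞} (hf : Measurable f)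
    {E : Set (G → Bool)} (hE : MeasurableSet E) :
    ∫⁻ A in E, f (transl s A) ∂μ = eβ c β s * ∫⁻ A in transl s '' E, f A ∂μ := by
  have hTE : MeasurableSet (transl s '' E) := measurableSet_image_transl s hE
  have key : ∀ A, E.indicator (fun A => f (transl s A)) A
      = (transl s '' E).indicator f (transl s A) := by
    intro A
    by_cases hA : A ∈ E
    · rw [Set.indicator_of_mem hA, Set.indicator_of_mem (Set.mem_image_of_mem _ hA)]
    · rw [Set.indicator_of_notMem hA, Set.indicator_of_notMem]
      rintro ⟨B, hB, hBA⟩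
      have : B = A := by
        have := congrArg (transl (-s)) hBA
        rwa [transl_cancel', transl_cancel'] at this
      exact hA (this ▸ hB)
  calc ∫⁻ A in E, f (transl s A) ∂μ
      = ∫⁻ A, E.indicator (fun A => f (transl s A)) A ∂μ := by
        rw [lintegral_indicator hE]
    _ = ∫⁻ A, (transl s '' E).indicator f (transl s A) ∂μ := by
        simp_rw [key]
    _ = eβ c β s * ∫⁻ A, (transl s '' E).indicator f A ∂μ :=
        lintegral_comp_transl c β μ hc hconf s (hf.indicator hTE)
    _ = eβ c β s * ∫⁻ A in transl s '' E, f A ∂μ := by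
        rw [lintegral_indicator hTE]

lemma null_image_transl (hc : ∀ s t : G, c (s + t) = c s + c t) (hconf : IsConformal c β μ) (s : G) {E : Set (G → Bool)} (hE : μ E = 0) :
    μ (transl s '' E) = 0 := by
  have h1 : transl s '' E ⊆ transl s '' (toMeasurable μ E) :=
    Set.image_mono (subset_toMeasurable μ E)
  refine le_antisymm (le_trans (measure_mono h1) ?_) zero_le
  rw [conf_image c β μ hc hconf s (measurableSet_toMeasurable μ E),
    measure_toMeasurable, hE, mul_zero]

end MeasLem

section SigmaF
variable [AddCommGroup G] [Countable G] (P : Set G)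
variable (μ : Measure (G → Bool))

/-- σ-finiteness from concentration + Radon property. -/
lemma sigmaFinite_of_radon (hconc : ConcYu P μ) (hRadon : IsRadonYu P μ) :
    SigmaFinite μ := by
  have : Nonempty G := ⟨0⟩
  obtain ⟨e, he⟩ := exists_surjective_nat G
  -- compact exhaustion of Yu
  let K : ℕ → Set (G → Bool) := fun n =>
    Her P ∩ (⋃ i ∈ Finset.range (n+1), {A : G → Bool | A (e i) = true})
          ∩ (⋃ i ∈ Finset.range (n+1), {A : G → Bool | A (e i) = false})
  have hKclosed : ∀ n, IsClosed (K n) := by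
    intro n
    refine ((isClosed_her P).inter ?_).inter ?_
    · exact isClosed_biUnion_finset fun i _ => isClosed_eval (e i) true
    · exact isClosed_biUnion_finset fun i _ => isClosed_eval (e i) false
  have hKY : ∀ n, K n ⊆ Yu P := by
    rintro n A ⟨⟨hher, h1⟩, h2⟩
    simp only [Set.mem_iUnion] at h1 h2
    obtain ⟨i, _, hi⟩ := h1
    obtain ⟨j, _, hj⟩ := h2
    exact ⟨⟨⟨e i, hi⟩, hher⟩, (allG_ne_iff (A := A)).2 ⟨e j, hj⟩⟩
  have hcover : Yu P ⊆ ⋃ n, K n := by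
    intro A hA
    obtain ⟨⟨⟨g, hg⟩, hher⟩, hne⟩ := hA
    obtain ⟨g', hg'⟩ := (allG_ne_iff (A := A)).1 hne
    obtain ⟨i, rfl⟩ := he g
    obtain ⟨j, rfl⟩ := he g'
    refine Set.mem_iUnion.2 ⟨max i j, ⟨hher, ?_⟩, ?_⟩
    · exact Set.mem_iUnion.2 ⟨i, Set.mem_iUnion.2
        ⟨Finset.mem_range.2 (Nat.lt_succ_of_le (le_max_left i j)), hg⟩⟩
    · exact Set.mem_iUnion.2 ⟨j, Set.mem_iUnion.2
        ⟨Finset.mem_range.2 (Nat.lt_succ_of_le (le_max_right i j)), hg'⟩⟩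
  refine Measure.sigmaFinite_of_countable
    (S := Set.range fun n => K n ∪ (Yu P)ᶜ) (Set.countable_range _) ?_ ?_
  · rintro s ⟨n, rfl⟩
    calc μ (K n ∪ (Yu P)ᶜ) ≤ μ (K n) + μ ((Yu P)ᶜ) := measure_union_le _ _
      _ = μ (K n) := by rw [hconc, add_zero]
      _ < ⊤ := hRadon _ ((hKclosed n).isCompact) (hKY n)
  · apply Set.eq_univ_of_forall
    intro A
    by_cases hA : A ∈ Yu P
    · obtain ⟨n, hn⟩ := Set.mem_iUnion.1 (hcover hA)
      exact ⟨K n ∪ (Yu P)ᶜ, ⟨n, rfl⟩, Or.inl hn⟩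
    · exact ⟨K 0 ∪ (Yu P)ᶜ, ⟨0, rfl⟩, Or.inr hA⟩

lemma pos_Xu (hν0 : μ ≠ 0) (hconc : ConcYu P μ) (hinv : IsInvariantG μ) :
    μ (Xu P) ≠ 0 := by
  intro h0
  have hall : ∀ g : G, μ (transl g '' Xu P) = 0 := fun g => by
    rw [hinv g _ (measurableSet_Xu P), h0]
  have hY : μ (Yu P) = 0 := by
    rw [Yu_eq_iUnion P]
    exact measure_iUnion_null hall
  apply hν0
  have h1 : μ Set.univ ≤ μ (Yu P) + μ ((Yu P)ᶜ) := by
    conv_lhs => rw [← Set.union_compl_self (Yu P)]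
    exact measure_union_le _ _
  rw [hY, hconc, add_zero] at h1
  exact Measure.measure_univ_eq_zero.1 (le_antisymm h1 zero_le)

end SigmaF

section Forward
variable [AddCommGroup G] [Countable G]

lemma forward (P : Set G) (hP0 : (0 : G) ∈ P) (hPadd : ∀ a ∈ P, ∀ b ∈ P, a + b ∈ P)
    (c : G → ℝ) (hc : ∀ s t : G, c (s + t) = c s + c t) (β : ℝ)
    (μ : Measure (G → Bool)) (hμ0 : μ ≠ 0) (hconc : ConcYu P μ)
    (hRadon : IsRadonYu P μ) (hconf : IsConformal c β μ)
    (ν : Measure (G → Bool)) (hν0 : ν ≠ 0) (hνconc : ConcYu P ν) (hνRadon : IsRadonYu P ν)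
    (hinv : IsInvariantG ν) (hνμ : ν ≪ μ) (hμν : μ ≪ ν) :
    ∃ φ : (G → Bool) → ℂ, Measurable φ ∧ ¬ (φ =ᵐ[μ.restrict (Xu P)] 0) ∧
      (∀ a ∈ P, ∫⁻ A in Xu P \ XuAdd P a, (‖φ A‖₊ : ℝ≥0∞) ^ 2 ∂μ < ⊤) ∧
      (∀ a ∈ P, ∀ᵐ A ∂(μ.restrict (Xu P)),
        φ (transl a A) = (Real.exp (β * c a / 2) : ℂ) * φ A) := by
  haveI : SigmaFinite μ := sigmaFinite_of_radon P μ hconc hRadon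
  haveI : SigmaFinite ν := sigmaFinite_of_radon P ν hνconc hνRadon
  set h : (G → Bool) → ℝ≥0∞ := ν.rnDeriv μ with hh
  have hmeas : Measurable h := Measure.measurable_rnDeriv ν μ
  have hwd : μ.withDensity h = ν := Measure.withDensity_rnDeriv_eq ν μ hνμ
  have hfin : ∀ᵐ A ∂μ, h A < ⊤ := Measure.rnDeriv_lt_top ν μ
  have hνE : ∀ E : Set (G → Bool), MeasurableSet E → ν E = ∫⁻ A in E, h A ∂μ := by
    intro E hE
    rw [← hwd, withDensity_apply _ hE]
  -- covariance of the density
  have hcov : ∀ s : G, (fun A => h (transl s A)) =ᵐ[μ] fun A => eβ c β s * h A := by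
    intro s
    apply ae_eq_of_forall_setLIntegral_eq_of_sigmaFinite
      (hmeas.comp (measurable_transl s)) (hmeas.const_mul _)
    intro E hE _
    calc ∫⁻ A in E, h (transl s A) ∂μ
        = eβ c β s * ∫⁻ A in transl s '' E, h A ∂μ :=
          setLintegral_comp_transl c β μ hc hconf s hmeas hE
      _ = eβ c β s * ν (transl s '' E) := by
          rw [hνE _ (measurableSet_image_transl s hE)]
      _ = eβ c β s * ν E := by rw [hinv s E hE]
      _ = eβ c β s * ∫⁻ A in E, h A ∂μ := by rw [hνE E hE]
      _ = ∫⁻ A in E, eβ c β s * h A ∂μ := by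
          rw [lintegral_const_mul _ hmeas]
  have hexp2 : ∀ u : ℝ, Real.sqrt (Real.exp u) = Real.exp (u / 2) := by
    intro u
    have : Real.exp u = Real.exp (u / 2) ^ 2 := by
      rw [sq, ← Real.exp_add]; ring_nf
    rw [this, Real.sqrt_sq (Real.exp_nonneg _)]
  refine ⟨fun A => ((Real.sqrt (h A).toReal : ℝ) : ℂ), ?_, ?_, ?_, ?_⟩
  · exact Complex.measurable_ofReal.comp
      (Real.continuous_sqrt.measurable.comp hmeas.ennreal_toReal)
  · -- not a.e. zero
    intro hzero
    have hνXu : ν (Xu P) ≠ 0 := pos_Xu P ν hν0 hνconc hinv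
    apply hνXu
    rw [hνE _ (measurableSet_Xu P), ← lintegral_zero (μ := μ.restrict (Xu P))]
    apply lintegral_congr_ae
    filter_upwards [hzero, ae_restrict_of_ae hfin] with A hA hAfin
    have h1 : Real.sqrt (h A).toReal = 0 := by
      have := hA
      simp only [Pi.zero_apply, Complex.ofReal_eq_zero] at this
      exact this
    have h2 : (h A).toReal = 0 :=
      le_antisymm (Real.sqrt_eq_zero'.1 h1) ENNReal.toReal_nonneg
    rcases ENNReal.toReal_eq_zero_iff _ |>.1 h2 with h3 | h3
    · exact h3
    · exact absurd h3 hAfin.ne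
  · -- square-integrability
    intro a ha
    rw [Xu_diff_eq P a ha]
    have hsq : ∀ᵐ A ∂μ, ((‖((Real.sqrt (h A).toReal : ℝ) : ℂ)‖₊ : ℝ≥0∞)) ^ 2 = h A := by
      filter_upwards [hfin] with A hA
      rw [Complex.nnnorm_real,
        ← enorm_eq_nnnorm, Real.enorm_eq_ofReal (Real.sqrt_nonneg _), ← ENNReal.ofReal_pow (Real.sqrt_nonneg _),
        Real.sq_sqrt ENNReal.toReal_nonneg, ENNReal.ofReal_toReal hA.ne]
    calc ∫⁻ A in Sset P a, (‖((Real.sqrt (h A).toReal : ℝ) : ℂ)‖₊ : ℝ≥0∞) ^ 2 ∂μ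
        = ∫⁻ A in Sset P a, h A ∂μ := lintegral_congr_ae (ae_restrict_of_ae hsq)
      _ = ν (Sset P a) := (hνE _ (measurableSet_Sset P a)).symm
      _ < ⊤ := hνRadon _ (isCompact_Sset P a) (Sset_subset_Yu P a)
  · -- covariance
    intro a ha
    filter_upwards [ae_restrict_of_ae (hcov a), ae_restrict_of_ae hfin] with A hA hAfin
    have h1 : (h (transl a A)).toReal = Real.exp (β * c a) * (h A).toReal := by
      rw [hA, ENNReal.toReal_mul, eβ, ENNReal.toReal_ofReal (Real.exp_nonneg _)]
    rw [h1, Real.sqrt_mul (Real.exp_nonneg _), hexp2, Complex.ofReal_mul]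
end Forward

section Reverse
variable [AddCommGroup G] [Countable G]

/-- the set of "good" points for φ -/
def GoodSet (P : Set G) (c : G → ℝ) (β : ℝ) (φ : (G → Bool) → ℂ) : Set (G → Bool) :=
  {A | ∀ a ∈ P, A ∈ Xu P → φ (transl a A) = (Real.exp (β * c a / 2) : ℂ) * φ A}

def DD (P : Set G) (e : ℕ → G) (n : ℕ) : Set (G → Bool) :=
  {A | transl (-(e n)) A ∈ Xu P ∧ ∀ m < n, transl (-(e m)) A ∉ Xu P}

noncomputable def FF (c : G → ℝ) (β : ℝ) (φ : (G → Bool) → ℂ) (e : ℕ → G) (n : ℕ) :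
    (G → Bool) → ℝ≥0∞ :=
  fun A => eβ c β (e n) * (‖φ (transl (-(e n)) A)‖₊ : ℝ≥0∞) ^ 2

noncomputable def Phi (P : Set G) (c : G → ℝ) (β : ℝ) (φ : (G → Bool) → ℂ) (e : ℕ → G) :
    (G → Bool) → ℝ≥0∞ :=
  fun A => ∑' n, (DD P e n).indicator (FF c β φ e n) A

lemma measurableSet_DD (P : Set G) (e : ℕ → G) (n : ℕ) : MeasurableSet (DD P e n) := by
  have h1 : ∀ k : ℕ, MeasurableSet {A : G → Bool | transl (-(e k)) A ∈ Xu P} := fun k =>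
    (measurable_transl (-(e k))) (measurableSet_Xu P)
  have : DD P e n = {A : G → Bool | transl (-(e n)) A ∈ Xu P} ∩
      (⋂ m ∈ Finset.range n, {A : G → Bool | transl (-(e m)) A ∈ Xu P}ᶜ) := by
    ext A
    simp only [DD, Set.mem_inter_iff, Set.mem_setOf_eq, Set.mem_iInter, Set.mem_compl_iff,
      Finset.mem_range]
  rw [this]
  exact (h1 n).inter (MeasurableSet.biInter (Set.to_countable _) fun m _ => (h1 m).compl)

lemma measurable_FF (c : G → ℝ) (β : ℝ) {φ : (G → Bool) → ℂ} (hφ : Measurable φ)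
    (e : ℕ → G) (n : ℕ) : Measurable (FF c β φ e n) :=
  ((((hφ.comp (measurable_transl (-(e n)))).nnnorm).coe_nnreal_ennreal).pow_const 2).const_mul _

lemma measurable_Phi (P : Set G) (c : G → ℝ) (β : ℝ) {φ : (G → Bool) → ℂ}
    (hφ : Measurable φ) (e : ℕ → G) : Measurable (Phi P c β φ e) :=
  Measurable.ennreal_tsum fun n => (measurable_FF c β hφ e n).indicator (measurableSet_DD P e n)

lemma DD_unique {P : Set G} {e : ℕ → G} {n m : ℕ} {A : G → Bool}
    (hn : A ∈ DD P e n) (hm : A ∈ DD P e m) : n = m := by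
  by_contra hne
  rcases Nat.lt_or_ge n m with h | h
  · exact hm.2 n h hn.1
  · exact hn.2 m (lt_of_le_of_ne h (Ne.symm hne)) hm.1

lemma Phi_eq_of_mem {P : Set G} {c : G → ℝ} {β : ℝ} {φ : (G → Bool) → ℂ} {e : ℕ → G}
    {n : ℕ} {A : G → Bool} (hA : A ∈ DD P e n) :
    Phi P c β φ e A = FF c β φ e n A := by
  rw [Phi, tsum_eq_single n]
  · exact Set.indicator_of_mem hA _
  · intro m hmn
    apply Set.indicator_of_notMem
    intro hm
    exact hmn (DD_unique hm hA)

lemma Phi_eq_zero {P : Set G} {c : G → ℝ} {β : ℝ} {φ : (G → Bool) → ℂ} {e : ℕ → G}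
    {A : G → Bool} (hA : ∀ n, transl (-(e n)) A ∉ Xu P) :
    Phi P c β φ e A = 0 := by
  rw [Phi]
  convert tsum_zero with n
  exact Set.indicator_of_notMem (fun h => hA n h.1) _

lemma exists_DD {P : Set G} {e : ℕ → G} {A : G → Bool}
    (hex : ∃ n, transl (-(e n)) A ∈ Xu P) : ∃ n, A ∈ DD P e n := by
  classical
  exact ⟨Nat.find hex, Nat.find_spec hex, fun m hm => Nat.find_min hex hm⟩

lemma ennnorm_exp_half_sq (u : ℝ) :
    ((‖((Real.exp (u / 2) : ℝ) : ℂ)‖₊ : ℝ≥0∞)) ^ 2 = ENNReal.ofReal (Real.exp u) := by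
  rw [Complex.nnnorm_real, ← enorm_eq_nnnorm, Real.enorm_eq_ofReal (Real.exp_nonneg _),
    ← ENNReal.ofReal_pow (Real.exp_nonneg _)]
  congr 1
  rw [sq, ← Real.exp_add]
  congr 1
  ring

/-- independence of the choice of translate -/
lemma indep {P : Set G} (hPgen : ∀ g : G, ∃ a ∈ P, ∃ b ∈ P, g = a - b)
    {c : G → ℝ} (hc : ∀ s t : G, c (s + t) = c s + c t) {β : ℝ}
    {φ : (G → Bool) → ℂ} {A : G → Bool}
    (hgood : ∀ g : G, transl g A ∈ GoodSet P c β φ) {g₁ g₂ : G}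
    (h₁ : transl (-g₁) A ∈ Xu P) (h₂ : transl (-g₂) A ∈ Xu P) :
    eβ c β g₁ * (‖φ (transl (-g₁) A)‖₊ : ℝ≥0∞) ^ 2
      = eβ c β g₂ * (‖φ (transl (-g₂) A)‖₊ : ℝ≥0∞) ^ 2 := by
  obtain ⟨p, hp, q, hq, heq⟩ := hPgen (g₁ - g₂)
  have k1 : φ (transl p (transl (-g₁) A)) =
      (Real.exp (β * c p / 2) : ℂ) * φ (transl (-g₁) A) :=
    hgood (-g₁) p hp h₁
  have k2 : φ (transl q (transl (-g₂) A)) =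
      (Real.exp (β * c q / 2) : ℂ) * φ (transl (-g₂) A) :=
    hgood (-g₂) q hq h₂
  have hpq : transl p (transl (-g₁) A) = transl q (transl (-g₂) A) := by
    have hw0 : g₁ - p = g₂ - q := sub_eq_sub_iff_sub_eq_sub.1 heq
    have h2 := congrArg Neg.neg hw0
    rw [neg_sub, neg_sub] at h2
    rw [transl_transl, transl_transl, ← sub_eq_add_neg, ← sub_eq_add_neg, h2]
  have key : (Real.exp (β * c p / 2) : ℂ) * φ (transl (-g₁) A)
      = (Real.exp (β * c q / 2) : ℂ) * φ (transl (-g₂) A) := by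
    rw [← k1, ← k2, hpq]
  have hnn := congrArg (fun z : ℂ => ((‖z‖₊ : ℝ≥0∞)) ^ 2) key
  simp only [nnnorm_mul, ENNReal.coe_mul, mul_pow] at hnn
  rw [ennnorm_exp_half_sq, ennnorm_exp_half_sq] at hnn
  -- hnn : eβ p * ‖φ B‖² = eβ q * ‖φ C‖² (with ofReal exp = eβ)
  have hw : g₁ - p = g₂ - q := sub_eq_sub_iff_sub_eq_sub.1 heq
  have e₁ : eβ c β g₁ = eβ c β (g₁ - p) * eβ c β p := by
    rw [← eβ_mul c β hc]; congr 1; abel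
  have e₂ : eβ c β g₂ = eβ c β (g₂ - q) * eβ c β q := by
    rw [← eβ_mul c β hc]; congr 1; abel
  rw [e₁, e₂, ← hw, mul_assoc, mul_assoc]
  exact congrArg (fun x => eβ c β (g₁ - p) * x) hnn

end Reverse

section Reverse2
variable [AddCommGroup G] [Countable G]

lemma transl_mem_Her {P : Set G} {A : G → Bool} (hA : A ∈ Her P) (s : G) :
    transl s A ∈ Her P := by
  intro g p hp h
  simp only [Her, Set.mem_setOf_eq, transl] at h ⊢
  have := hA (g - s) p hp h
  rwa [sub_right_comm] at this

lemma transl_mem_Her_iff {P : Set G} {A : G → Bool} (s : G) :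
    transl s A ∈ Her P ↔ A ∈ Her P := by
  constructor
  · intro h
    have := transl_mem_Her h (-s)
    rwa [transl_cancel'] at this
  · exact fun h => transl_mem_Her h s

lemma her_decomp (P : Set G) (g g' : G) :
    Her P ∩ {A : G → Bool | A g = true} ∩ {A : G → Bool | A g' = false}
      = transl g '' Sset P (g' - g) := by
  ext A
  rw [mem_image_transl]
  constructor
  · rintro ⟨⟨hher, hg⟩, hg'⟩
    refine ⟨⟨(transl_mem_Her_iff (-g)).2 hher, ?_⟩, ?_⟩
    · show transl (-g) A 0 = true
      rw [transl_apply, zero_sub, neg_neg]; exact hg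
    · show transl (-g) A (g' - g) = false
      rw [transl_apply, sub_neg_eq_add, sub_add_cancel]; exact hg'
  · rintro ⟨⟨hher, h0⟩, hgg⟩
    refine ⟨⟨?_, ?_⟩, ?_⟩
    · exact (transl_mem_Her_iff (-g)).1 hher
    · have : transl (-g) A 0 = true := h0
      rwa [transl_apply, zero_sub, neg_neg] at this
    · have : transl (-g) A (g' - g) = false := hgg
      rwa [transl_apply, sub_neg_eq_add, sub_add_cancel] at this

lemma isOpen_eval (g : G) (b : Bool) : IsOpen {A : G → Bool | A g = b} := by
  have : {A : G → Bool | A g = b} = (fun A : G → Bool => A g) ⁻¹' {b} := rfl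
  rw [this]
  exact (continuous_apply g).isOpen_preimage _ (isOpen_discrete _)

lemma reverse (P : Set G) (hP0 : (0 : G) ∈ P) (hPadd : ∀ a ∈ P, ∀ b ∈ P, a + b ∈ P)
    (hPgen : ∀ g : G, ∃ a ∈ P, ∃ b ∈ P, g = a - b)
    (a₀ : G) (ha₀ : a₀ ∈ P) (hunit : ∀ s : G, ∃ n : ℕ, n • a₀ - s ∈ P)
    (c : G → ℝ) (hc : ∀ s t : G, c (s + t) = c s + c t) (β : ℝ)
    (μ : Measure (G → Bool)) (hμ0 : μ ≠ 0) (hconc : ConcYu P μ)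
    (hRadon : IsRadonYu P μ) (hconf : IsConformal c β μ) (herg : IsErgodicG μ)
    (φ : (G → Bool) → ℂ) (hφm : Measurable φ) (hφ0 : ¬ (φ =ᵐ[μ.restrict (Xu P)] 0))
    (hφint : ∀ a ∈ P, ∫⁻ A in Xu P \ XuAdd P a, (‖φ A‖₊ : ℝ≥0∞) ^ 2 ∂μ < ⊤)
    (hφcov : ∀ a ∈ P, ∀ᵐ A ∂(μ.restrict (Xu P)),
        φ (transl a A) = (Real.exp (β * c a / 2) : ℂ) * φ A) :
    ∃ ν : Measure (G → Bool), ν ≠ 0 ∧ ConcYu P ν ∧ IsRadonYu P ν ∧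
      IsInvariantG ν ∧ ν ≪ μ ∧ μ ≪ ν := by
  obtain ⟨e, he⟩ := exists_surjective_nat G
  -- the good set has full measure
  have hgood_ae : ∀ᵐ A ∂μ, A ∈ GoodSet P c β φ := by
    rw [show GoodSet P c β φ = {A | ∀ a ∈ P, A ∈ Xu P →
      φ (transl a A) = (Real.exp (β * c a / 2) : ℂ) * φ A} from rfl]
    have : ∀ a ∈ P, ∀ᵐ A ∂μ, A ∈ Xu P →
        φ (transl a A) = (Real.exp (β * c a / 2) : ℂ) * φ A := fun a ha =>
      (ae_restrict_iff' (measurableSet_Xu P)).1 (hφcov a ha)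
    exact (ae_ball_iff (Set.to_countable P)).2 this
  set N₀ : Set (G → Bool) := toMeasurable μ ((GoodSet P c β φ)ᶜ) with hN₀def
  have hN₀meas : MeasurableSet N₀ := measurableSet_toMeasurable _ _
  have hN₀null : μ N₀ = 0 := by
    rw [hN₀def, measure_toMeasurable]
    exact ae_iff.1 hgood_ae
  have hN₀good : ∀ A, A ∉ N₀ → A ∈ GoodSet P c β φ := by
    intro A hA
    by_contra h
    exact hA (subset_toMeasurable μ _ h)
  set N : Set (G → Bool) := ⋃ g : G, transl g '' N₀ with hNdef
  have hNmeas : MeasurableSet N :=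
    MeasurableSet.iUnion fun g => measurableSet_image_transl g hN₀meas
  have hNnull : μ N = 0 :=
    measure_iUnion_null fun g => null_image_transl c β μ hc hconf g hN₀null
  have hNtrans : ∀ s : G, transl s '' N = N := by
    intro s
    rw [hNdef, Set.image_iUnion]
    have himg : ∀ g : G, transl s '' (transl g '' N₀) = transl (s + g) '' N₀ := by
      intro g
      rw [Set.image_image]
      simp only [transl_transl]
    simp_rw [himg]
    ext A
    simp only [Set.mem_iUnion]
    constructor
    · rintro ⟨g, hg⟩; exact ⟨s + g, hg⟩
    · rintro ⟨g, hg⟩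
      exact ⟨g - s, by rwa [add_sub_cancel]⟩
  have hNgood : ∀ A, A ∉ N → ∀ g : G, transl g A ∈ GoodSet P c β φ := by
    intro A hA g
    apply hN₀good
    intro hmem
    apply hA
    rw [hNdef]
    refine Set.mem_iUnion.2 ⟨-g, ?_⟩
    exact ⟨transl g A, hmem, transl_cancel' g A⟩
  -- the density and the measure
  set Φ : (G → Bool) → ℝ≥0∞ := Phi P c β φ e with hΦdef
  have hΦmeas : Measurable Φ := measurable_Phi P c β hφm e
  set ν : Measure (G → Bool) := μ.withDensity Φ with hνdef
  have hνap : ∀ E : Set (G → Bool), MeasurableSet E → ν E = ∫⁻ A in E, Φ A ∂μ := by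
    intro E hE; rw [hνdef, withDensity_apply _ hE]
  -- pointwise covariance off N
  have hΦcov : ∀ A, A ∉ N → ∀ s : G, Φ (transl s A) = eβ c β s * Φ A := by
    intro A hA s
    by_cases hex : ∃ n, transl (-(e n)) A ∈ Xu P
    · obtain ⟨n₀, hn₀⟩ := exists_DD hex
      have hex' : ∃ m, transl (-(e m)) (transl s A) ∈ Xu P := by
        obtain ⟨m, hm⟩ := he (e n₀ + s)
        refine ⟨m, ?_⟩
        rw [transl_transl, hm]
        have : -(e n₀ + s) + s = -(e n₀) := by abel
        rw [this]
        exact hn₀.1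
      obtain ⟨m₁, hm₁⟩ := exists_DD hex'
      have hXm : transl (-(e m₁ - s)) A ∈ Xu P := by
        have := hm₁.1
        rwa [transl_transl, show -(e m₁) + s = -(e m₁ - s) by abel] at this
      have key := indep hPgen hc (φ := φ) (hNgood A hA) (g₁ := e m₁ - s) (g₂ := e n₀) hXm hn₀.1
      have hsplit : eβ c β (e m₁) = eβ c β s * eβ c β (e m₁ - s) := by
        rw [← eβ_mul c β hc]; congr 1; abel
      calc Φ (transl s A)
          = eβ c β (e m₁) * (‖φ (transl (-(e m₁ - s)) A)‖₊ : ℝ≥0∞) ^ 2 := by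
            rw [hΦdef, Phi_eq_of_mem hm₁, FF, transl_transl,
              show -(e m₁) + s = -(e m₁ - s) by abel]
        _ = eβ c β s * (eβ c β (e m₁ - s) * (‖φ (transl (-(e m₁ - s)) A)‖₊ : ℝ≥0∞) ^ 2) := by
            rw [hsplit, mul_assoc]
        _ = eβ c β s * (eβ c β (e n₀) * (‖φ (transl (-(e n₀)) A)‖₊ : ℝ≥0∞) ^ 2) := by
            rw [key]
        _ = eβ c β s * Φ A := by
            rw [hΦdef, Phi_eq_of_mem hn₀, FF]
    · have hz : Φ A = 0 := Phi_eq_zero (fun n h => hex ⟨n, h⟩)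
      have hz' : Φ (transl s A) = 0 := by
        apply Phi_eq_zero
        intro n h
        rw [transl_transl] at h
        obtain ⟨m, hm⟩ := he (e n - s)
        apply hex
        refine ⟨m, ?_⟩
        rw [hm, show -(e n - s) = -(e n) + s by abel]
        exact h
      rw [hz, hz', mul_zero]
  -- a.e. covariance
  have hNae : ∀ᵐ A ∂μ, A ∉ N := by
    rw [ae_iff]
    simpa using hNnull
  -- value on Xu
  have hΦXu : ∀ A, A ∉ N → A ∈ Xu P → Φ A = (‖φ A‖₊ : ℝ≥0∞) ^ 2 := by
    intro A hA hXu
    obtain ⟨n, hn⟩ := he (0 : G)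
    have hex : ∃ m, transl (-(e m)) A ∈ Xu P :=
      ⟨n, by rw [hn, neg_zero, transl_zero]; exact hXu⟩
    obtain ⟨n₀, hn₀⟩ := exists_DD hex
    have h0X : transl (-(0 : G)) A ∈ Xu P := by rw [neg_zero, transl_zero]; exact hXu
    have key := indep hPgen hc (φ := φ) (hNgood A hA) (g₁ := e n₀) (g₂ := (0 : G)) hn₀.1 h0X
    rw [hΦdef, Phi_eq_of_mem hn₀, FF, key, neg_zero, transl_zero,
      eβ, c_zero c hc, mul_zero, Real.exp_zero, ENNReal.ofReal_one, one_mul]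
  -- invariance of ν
  have hinv : IsInvariantG ν := by
    intro s E hE
    have hTE : MeasurableSet (transl s '' E) := measurableSet_image_transl s hE
    have h1 : ∫⁻ A in E, Φ (transl s A) ∂μ = eβ c β s * ∫⁻ A in transl s '' E, Φ A ∂μ :=
      setLintegral_comp_transl c β μ hc hconf s hΦmeas hE
    have h2 : ∫⁻ A in E, Φ (transl s A) ∂μ = eβ c β s * ∫⁻ A in E, Φ A ∂μ := by
      rw [← lintegral_const_mul _ hΦmeas]
      apply lintegral_congr_ae
      filter_upwards [ae_restrict_of_ae hNae] with A hA
      exact hΦcov A hA s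
    rw [hνap _ hTE, hνap _ hE]
    exact (ENNReal.mul_right_inj (eβ_ne_zero c β s) (eβ_ne_top c β s)).1 (h1.symm.trans h2)
  -- ν is nonzero on Xu
  have hνXu : ν (Xu P) ≠ 0 := by
    rw [hνap _ (measurableSet_Xu P)]
    intro hzero
    apply hφ0
    have hcongr : ∫⁻ A in Xu P, Φ A ∂μ = ∫⁻ A in Xu P, (‖φ A‖₊ : ℝ≥0∞) ^ 2 ∂μ := by
      apply lintegral_congr_ae
      filter_upwards [ae_restrict_of_ae hNae, ae_restrict_mem (measurableSet_Xu P)]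
        with A hA hXu
      exact hΦXu A hA hXu
    rw [hcongr] at hzero
    have := (setLIntegral_eq_zero_iff (measurableSet_Xu P)
      ((hφm.nnnorm.coe_nnreal_ennreal).pow_const 2)).1 hzero
    rw [Filter.EventuallyEq, ae_restrict_iff' (measurableSet_Xu P)]
    filter_upwards [this] with A hA
    intro hXu
    have h2 : ((‖φ A‖₊ : ℝ≥0∞)) ^ 2 = 0 := hA hXu
    have h3 : ‖φ A‖₊ = 0 := by simpa using h2
    simpa using h3
  have hν0 : ν ≠ 0 := by
    intro h
    rw [h] at hνXu
    simp at hνXu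
  -- concentration
  have hνconc : ConcYu P ν := by
    rw [ConcYu, hνap _ (measurableSet_Yu P).compl]
    exact setLIntegral_measure_zero _ _ hconc
  -- finiteness on the sets Sset
  have hSfin : ∀ b : G, ν (Sset P b) < ⊤ := by
    intro b
    obtain ⟨n, hn⟩ := hunit b
    have ha : (n • a₀ : G) ∈ P := nsmul_mem_P P hP0 hPadd ha₀ n
    have hsub : Sset P b ⊆ Sset P (n • a₀) := Sset_subset_Sset P hn
    refine lt_of_le_of_lt (measure_mono hsub) ?_
    have hXd := Xu_diff_eq P (n • a₀) ha
    have hSX : Sset P (n • a₀) ⊆ Xu P := by rw [← hXd]; exact Set.diff_subset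
    rw [hνap _ (measurableSet_Sset P (n • a₀))]
    have hcongr : ∫⁻ A in Sset P (n • a₀), Φ A ∂μ
        = ∫⁻ A in Sset P (n • a₀), (‖φ A‖₊ : ℝ≥0∞) ^ 2 ∂μ := by
      apply lintegral_congr_ae
      filter_upwards [ae_restrict_of_ae hNae, ae_restrict_mem (measurableSet_Sset P (n • a₀))]
        with A hA hmem
      exact hΦXu A hA (hSX hmem)
    rw [hcongr, ← hXd]
    exact hφint _ ha
  -- Radon property
  have hνRadon : IsRadonYu P ν := by
    intro K hK hKY
    have hc1 : K ⊆ ⋃ g : G, {A : G → Bool | A g = true} := by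
      intro A hA
      obtain ⟨g, hg⟩ := (hKY hA).1.1
      exact Set.mem_iUnion.2 ⟨g, hg⟩
    have hc2 : K ⊆ ⋃ g : G, {A : G → Bool | A g = false} := by
      intro A hA
      obtain ⟨g, hg⟩ := (allG_ne_iff (A := A)).1 (hKY hA).2
      exact Set.mem_iUnion.2 ⟨g, hg⟩
    obtain ⟨t₁, ht₁⟩ := hK.elim_finite_subcover _ (fun g => isOpen_eval g true) hc1
    obtain ⟨t₂, ht₂⟩ := hK.elim_finite_subcover _ (fun g => isOpen_eval g false) hc2
    have hcover : K ⊆ ⋃ g ∈ t₁, ⋃ g' ∈ t₂,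
        (Her P ∩ {A : G → Bool | A g = true} ∩ {A : G → Bool | A g' = false}) := by
      intro A hA
      have hher : A ∈ Her P := (hKY hA).1.2
      obtain ⟨g, hg₁, hg⟩ := Set.mem_iUnion₂.1 (ht₁ hA)
      obtain ⟨g', hg'₁, hg'⟩ := Set.mem_iUnion₂.1 (ht₂ hA)
      exact Set.mem_iUnion₂.2 ⟨g, hg₁, Set.mem_iUnion₂.2 ⟨g', hg'₁, ⟨⟨hher, hg⟩, hg'⟩⟩⟩
    calc ν K ≤ ν (⋃ g ∈ t₁, ⋃ g' ∈ t₂,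
        (Her P ∩ {A : G → Bool | A g = true} ∩ {A : G → Bool | A g' = false})) :=
          measure_mono hcover
      _ ≤ ∑ g ∈ t₁, ν (⋃ g' ∈ t₂,
          (Her P ∩ {A : G → Bool | A g = true} ∩ {A : G → Bool | A g' = false})) :=
          measure_biUnion_finset_le _ _
      _ ≤ ∑ g ∈ t₁, ∑ g' ∈ t₂,
          ν (Her P ∩ {A : G → Bool | A g = true} ∩ {A : G → Bool | A g' = false}) :=
          Finset.sum_le_sum fun g _ => measure_biUnion_finset_le _ _
      _ < ⊤ := by
          rw [ENNReal.sum_lt_top]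
          intro g _
          rw [ENNReal.sum_lt_top]
          intro g' _
          rw [her_decomp P g g', hinv g _ (measurableSet_Sset P (g' - g))]
          exact hSfin (g' - g)
  -- absolute continuity both ways
  have hνμ : ν ≪ μ := withDensity_absolutelyContinuous μ Φ
  have hμν : μ ≪ ν := by
    set Eset : Set (G → Bool) := Nᶜ ∩ (Φ ⁻¹' {0}) with hEdef
    have hEmeas : MeasurableSet Eset :=
      hNmeas.compl.inter (hΦmeas (measurableSet_singleton 0))
    have hEinv : ∀ s : G, transl s '' Eset = Eset := by
      intro s
      ext B
      rw [mem_image_transl]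
      constructor
      · rintro ⟨hAN, hA0⟩
        constructor
        · intro hBN
          exact hAN (by rw [← hNtrans (-s)]; exact ⟨B, hBN, rfl⟩)
        · have := hΦcov _ hAN s
          rw [transl_cancel] at this
          simp only [Set.mem_preimage, Set.mem_singleton_iff] at hA0 ⊢
          rw [this, hA0, mul_zero]
      · rintro ⟨hBN, hB0⟩
        constructor
        · intro hAN
          apply hBN
          rw [← hNtrans s]
          exact ⟨_, hAN, transl_cancel s B⟩
        · simp only [Set.mem_preimage, Set.mem_singleton_iff] at hB0 ⊢
          by_contra hA0
          have hAN : transl (-s) B ∉ N := by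
            intro hAN
            apply hBN
            rw [← hNtrans s]
            exact ⟨_, hAN, transl_cancel s B⟩
          have := hΦcov _ hAN s
          rw [transl_cancel] at this
          rw [this] at hB0
          rcases mul_eq_zero.1 hB0 with h | h
          · exact eβ_ne_zero c β s h
          · exact hA0 h
    rcases herg Eset hEmeas hEinv with hE0 | hE0
    · -- Φ ≠ 0 a.e.
      have hΦne : ∀ᵐ A ∂μ, Φ A ≠ 0 := by
        have hsub : {A | Φ A = 0} ⊆ Eset ∪ N := by
          intro A hA
          by_cases hN : A ∈ N
          · exact Or.inr hN
          · exact Or.inl ⟨hN, hA⟩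
        rw [ae_iff]
        simp only [not_not]
        refine measure_mono_null hsub ?_
        exact measure_union_null hE0 hNnull
      exact withDensity_absolutelyContinuous' hΦmeas.aemeasurable hΦne
    · -- impossible : Φ = 0 a.e.
      exfalso
      apply hνXu
      rw [hνap _ (measurableSet_Xu P)]
      have : ∀ᵐ A ∂μ, Φ A = 0 := by
        have : ∀ᵐ A ∂μ, A ∈ Eset := by
          rw [ae_iff]
          exact hE0
        filter_upwards [this] with A hA
        exact hA.2
      rw [← lintegral_zero (μ := μ.restrict (Xu P))]
      apply lintegral_congr_ae
      exact ae_restrict_of_ae this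
  exact ⟨ν, hν0, hνconc, hνRadon, hinv, hνμ, hμν⟩

end Reverse2

theorem stmt12 (G : Type) [AddCommGroup G] [Countable G]
    (P : Set G) (hP0 : (0 : G) ∈ P) (hPadd : ∀ a ∈ P, ∀ b ∈ P, a + b ∈ P)
    (hPgen : ∀ g : G, ∃ a ∈ P, ∃ b ∈ P, g = a - b)
    (a₀ : G) (ha₀ : a₀ ∈ P) (hunit : ∀ s : G, ∃ n : ℕ, n • a₀ - s ∈ P)
    (c : G → ℝ) (hc : ∀ s t : G, c (s + t) = c s + c t) (β : ℝ)
    (μ : Measure (G → Bool)) (hμ0 : μ ≠ 0) (hconc : ConcYu P μ)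
    (hRadon : IsRadonYu P μ) (hconf : IsConformal c β μ) (herg : IsErgodicG μ) :
    (∃ ν : Measure (G → Bool), ν ≠ 0 ∧ ConcYu P ν ∧ IsRadonYu P ν ∧
      IsInvariantG ν ∧ ν ≪ μ ∧ μ ≪ ν) ↔
    (∃ φ : (G → Bool) → ℂ, Measurable φ ∧ ¬ (φ =ᵐ[μ.restrict (Xu P)] 0) ∧
      (∀ a ∈ P, ∫⁻ A in Xu P \ XuAdd P a, (‖φ A‖₊ : ℝ≥0∞) ^ 2 ∂μ < ⊤) ∧
      (∀ a ∈ P, ∀ᵐ A ∂(μ.restrict (Xu P)),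
        φ (transl a A) = (Real.exp (β * c a / 2) : ℂ) * φ A)) := by
  constructor
  · rintro ⟨ν, hν0, hνconc, hνRadon, hinv, hνμ, hμν⟩
    exact forward P hP0 hPadd c hc β μ hμ0 hconc hRadon hconf ν hν0 hνconc hνRadon hinv hνμ hμν
  · rintro ⟨φ, hφm, hφ0, hφint, hφcov⟩
    exact reverse P hP0 hPadd hPgen a₀ ha₀ hunit c hc β μ hμ0 hconc hRadon hconf herg φ hφm hφ0 hφint hφcov

end Stmt12
end

section
/- Let (Y, X) be a pure (G,P)-space and μ a G-invariant σ-finite measure on Y. Let U_s denote the Koopman unitary on L²(Y, μ), (U_s f)(y) = f(y - s), and regard L²(X, μ) as the closed subspace of L²(Y, μ) of functions vanishing μ-a.e. off X. Then: (i) for every a ∈ P, U_a maps L²(X, μ) into itself (so V_a := U_a|_{L²(X,μ)} defines a semigroup of isometries indexed by P); (ii) the union ⋃_{n ≥ 1} U_{n·a₀}^{-1}(L²(X, μ)) is dense in L²(Y, μ). In other words, the Koopman representation of G on L²(Y, μ) is the minimal unitary dilation of V. -/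
/-!
STATEMENT 15. Let (Y, X) be a pure (G,P)-space and μ a G-invariant σ-finite measure
on Y. Let U_s be the Koopman unitary on L²(Y, μ), (U_s f)(y) = f(y - s), and regard
L²(X, μ) ⊆ L²(Y, μ) as the functions vanishing μ-a.e. off X. Then:
(i) for every a ∈ P, U_a maps L²(X, μ) into itself (so V_a := U_a|_{L²(X,μ)} is a
semigroup of isometries indexed by P);
(ii) ⋃_{n ≥ 1} U_{n·a₀}^{-1}(L²(X, μ)) is dense in L²(Y, μ).
That is, the Koopman representation of G on L²(Y, μ) is the minimal unitary
dilation of V.  Note (U_s f)(y) = f(y - s) = f(act (-s) y), and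
f ∈ U_{n·a₀}^{-1}(L²(X,μ)) iff U_{n·a₀} f vanishes a.e. off X.
-/

open MeasureTheory Real Set Filter
open scoped ENNReal NNReal Topology

namespace Stmt15

theorem stmt15 (G : Type) [AddCommGroup G] [Countable G]
    (P : Set G) (hP0 : (0 : G) ∈ P) (hPadd : ∀ a ∈ P, ∀ b ∈ P, a + b ∈ P)
    (hPgen : ∀ g : G, ∃ a ∈ P, ∃ b ∈ P, g = a - b)
    (a₀ : G) (ha₀ : a₀ ∈ P) (hunit : ∀ s : G, ∃ n : ℕ, n • a₀ - s ∈ P)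
    -- (Y, X) is a pure (G,P)-space:
    (Y : Type) [MeasurableSpace Y] [StandardBorelSpace Y]
    (act : G → Y → Y) (hactmeas : ∀ s : G, Measurable (act s))
    (hact0 : ∀ y : Y, act 0 y = y)
    (hactadd : ∀ s t : G, ∀ y : Y, act (s + t) y = act s (act t y))
    (X : Set Y) (hX : MeasurableSet X)
    (hXP : ∀ a ∈ P, ∀ x ∈ X, act a x ∈ X)
    (hcover : ∀ y : Y, ∃ a ∈ P, act a y ∈ X)
    (hpure : (⋂ a ∈ P, act a '' X) = (∅ : Set Y))
    -- μ is a G-invariant σ-finite measure on Y: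
    (μ : Measure Y) [SigmaFinite μ]
    (hinv : ∀ s : G, ∀ E : Set Y, MeasurableSet E → μ (act s ⁻¹' E) = μ E) :
    -- (i) each U_a, a ∈ P, maps L²(X, μ) into itself:
    (∀ a ∈ P, ∀ f : Lp ℂ 2 μ, (∀ᵐ y ∂μ, y ∉ X → f y = 0) →
      (∀ᵐ y ∂μ, y ∉ X → f (act (-a) y) = 0)) ∧
    -- (ii) ⋃_{n ≥ 1} U_{n·a₀}⁻¹(L²(X, μ)) is dense in L²(Y, μ):
    Dense {f : Lp ℂ 2 μ | ∃ n : ℕ, 1 ≤ n ∧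
      ∀ᵐ y ∂μ, y ∉ X → f (act (-(n • a₀ : G)) y) = 0} := by
  -- basic facts about the action
  have hact_cancel : ∀ s : G, ∀ y : Y, act s (act (-s) y) = y := by
    intro s y
    rw [← hactadd s (-s) y, add_neg_cancel, hact0]
  constructor
  · -- Part (i)
    intro a ha f hf
    rw [ae_iff] at hf ⊢
    set B : Set Y := {y | ¬(y ∉ X → f y = 0)} with hB
    set N : Set Y := toMeasurable μ B with hN
    have hNnull : μ N = 0 := by rw [hN, measure_toMeasurable]; exact hf
    have hsub : {y | ¬(y ∉ X → f (act (-a) y) = 0)} ⊆ act (-a) ⁻¹' N := by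
      intro y hy
      simp only [Set.mem_setOf_eq, Classical.not_imp] at hy
      obtain ⟨hyX, hfy⟩ := hy
      have hz : act (-a) y ∉ X := by
        intro hzX
        exact hyX (hact_cancel a y ▸ hXP a ha _ hzX)
      have : act (-a) y ∈ B := by
        simp only [hB, Set.mem_setOf_eq, Classical.not_imp]
        exact ⟨hz, hfy⟩
      exact subset_toMeasurable μ B this
    refine measure_mono_null hsub ?_
    rw [hinv (-a) N (measurableSet_toMeasurable μ B)]
    exact hNnull
  · -- Part (ii)
    -- the exhausting sets
    set S : ℕ → Set Y := fun n => act (n • a₀) ⁻¹' X with hS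
    have hSmeas : ∀ n, MeasurableSet (S n) := fun n => (hactmeas _) hX
    have hSmono : Monotone S := by
      refine monotone_nat_of_le_succ fun n z hz => ?_
      have : act ((n + 1) • a₀) z = act a₀ (act (n • a₀) z) := by
        rw [succ_nsmul, add_comm, hactadd]
      simp only [hS, Set.mem_preimage] at hz ⊢
      rw [this]
      exact hXP a₀ ha₀ _ hz
    have hSunion : ∀ z : Y, ∃ n : ℕ, z ∈ S n := by
      intro z
      obtain ⟨a, ha, hz⟩ := hcover z
      obtain ⟨n, hn⟩ := hunit a
      refine ⟨n, ?_⟩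
      have : act (n • a₀) z = act (n • a₀ - a) (act a z) := by
        rw [← hactadd]; congr 1; abel
      simp only [hS, Set.mem_preimage]
      rw [this]
      exact hXP _ hn _ hz
    rw [dense_iff_closure_eq]
    ext f
    simp only [Set.mem_univ, iff_true]
    -- approximating sequence
    set F : ℕ → Y → ℂ := fun n => (S n).indicator f with hF
    have hmemF : ∀ n, MemLp (F n) 2 μ := fun n => (Lp.memLp f).indicator (hSmeas n)
    set g : ℕ → Lp ℂ 2 μ := fun n => (hmemF n).toLp (F n) with hg
    -- each g n (for n ≥ 1) lies in the set
    have hgmem : ∀ n : ℕ, 1 ≤ n → g n ∈ {f : Lp ℂ 2 μ | ∃ n : ℕ, 1 ≤ n ∧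
        ∀ᵐ y ∂μ, y ∉ X → f (act (-(n • a₀ : G)) y) = 0} := by
      intro n hn
      refine ⟨n, hn, ?_⟩
      have hcoe : ∀ᵐ z ∂μ, g n z = F n z := (hmemF n).coeFn_toLp
      rw [ae_iff] at hcoe ⊢
      set B : Set Y := {z | ¬ g n z = F n z} with hB
      set N : Set Y := toMeasurable μ B with hN
      have hNnull : μ N = 0 := by rw [hN, measure_toMeasurable]; exact hcoe
      have hsub : {y | ¬(y ∉ X → g n (act (-(n • a₀ : G)) y) = 0)} ⊆
          act (-(n • a₀ : G)) ⁻¹' N := by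
        intro y hy
        simp only [Set.mem_setOf_eq, Classical.not_imp] at hy
        obtain ⟨hyX, hgy⟩ := hy
        by_contra hmem
        have hzB : act (-(n • a₀ : G)) y ∉ B := fun h =>
          hmem (subset_toMeasurable μ B h)
        have heq : g n (act (-(n • a₀ : G)) y) = F n (act (-(n • a₀ : G)) y) := by
          by_contra h; exact hzB h
        have hzS : act (-(n • a₀ : G)) y ∉ S n := by
          simp only [hS, Set.mem_preimage, hact_cancel]
          exact hyX
        exact hgy (heq.trans (Set.indicator_of_notMem hzS _))
      refine measure_mono_null hsub ?_
      rw [hinv _ N (measurableSet_toMeasurable μ B)]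
      exact hNnull
    -- g n → f in L²
    have htend : Tendsto g atTop (𝓝 f) := by
      rw [Lp.tendsto_Lp_iff_tendsto_eLpNorm' g f]
      -- compute the difference
      have hdiff : ∀ n, eLpNorm (⇑(g n) - ⇑f) 2 μ
          = eLpNorm ((S n)ᶜ.indicator ⇑f) 2 μ := by
        intro n
        have h1 : ⇑(g n) - ⇑f =ᵐ[μ] fun z => F n z - f z := by
          filter_upwards [(hmemF n).coeFn_toLp] with z hz
          simp [hg, hz]
        rw [eLpNorm_congr_ae h1]
        have h2 : (fun z => F n z - f z) = -((S n)ᶜ.indicator ⇑f) := by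
          funext z
          simp only [Pi.neg_apply]
          by_cases hz : z ∈ S n
          · simp [hF, Set.indicator_of_mem hz,
              Set.indicator_of_notMem (Set.notMem_compl_iff.mpr hz)]
          · simp [hF, Set.indicator_of_notMem hz,
              Set.indicator_of_mem (Set.mem_compl hz)]
        rw [h2]
        exact eLpNorm_neg _ _ _
      simp only [hdiff]
      -- dominated convergence on the lintegrals
      have hbound_meas : AEMeasurable (fun z => (‖f z‖₊ : ℝ≥0∞) ^ (2 : ℝ)) μ :=
        ((Lp.aestronglyMeasurable f).enorm).pow_const _
      have hfin : (∫⁻ z, (‖f z‖₊ : ℝ≥0∞) ^ (2 : ℝ) ∂μ) ≠ ∞ := by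
        have h := Lp.eLpNorm_lt_top f
        rw [eLpNorm_eq_lintegral_rpow_enorm_toReal (by norm_num) (by norm_num)] at h
        simp only [ENNReal.toReal_ofNat, enorm_eq_nnnorm] at h
        intro htop
        rw [htop, ENNReal.top_rpow_of_pos (by norm_num)] at h
        exact (lt_irrefl _ h).elim
      have hI : Tendsto
          (fun n => ∫⁻ z, ((S n)ᶜ.indicator (fun z => (‖f z‖₊ : ℝ≥0∞) ^ (2 : ℝ))) z ∂μ)
          atTop (𝓝 0) := by
        have := tendsto_lintegral_of_dominated_convergence'
          (F := fun n z => ((S n)ᶜ.indicator (fun z => (‖f z‖₊ : ℝ≥0∞) ^ (2 : ℝ))) z)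
          (f := fun _ => (0 : ℝ≥0∞))
          (bound := fun z => (‖f z‖₊ : ℝ≥0∞) ^ (2 : ℝ))
          (fun n => hbound_meas.indicator (hSmeas n).compl)
          (fun n => Eventually.of_forall fun z => Set.indicator_le_self _ _ z)
          hfin
          (Eventually.of_forall fun z => ?_)
        · simpa using this
        · obtain ⟨m, hm⟩ := hSunion z
          refine tendsto_const_nhds.congr' ?_
          filter_upwards [eventually_ge_atTop m] with k hk
          have : z ∈ S k := hSmono hk hm
          rw [Set.indicator_of_notMem (by simpa using this)]
      -- convert lintegral convergence to eLpNorm convergence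
      have heq : ∀ n, eLpNorm ((S n)ᶜ.indicator ⇑f) 2 μ =
          (∫⁻ z, ((S n)ᶜ.indicator (fun z => (‖f z‖₊ : ℝ≥0∞) ^ (2 : ℝ))) z ∂μ)
            ^ (1 / (2 : ℝ)) := by
        intro n
        rw [eLpNorm_eq_lintegral_rpow_enorm_toReal (by norm_num) (by norm_num)]
        simp only [ENNReal.toReal_ofNat, enorm_eq_nnnorm]
        congr 1
        refine lintegral_congr fun z => ?_
        by_cases hz : z ∈ (S n)ᶜ
        · simp [Set.indicator_of_mem hz]
        · simp [Set.indicator_of_notMem hz, ENNReal.zero_rpow_of_pos (by norm_num : (0:ℝ) < 2)]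
      simp only [heq]
      have hcont : Tendsto (fun x : ℝ≥0∞ => x ^ (1 / (2 : ℝ))) (𝓝 0) (𝓝 0) := by
        have := (ENNReal.continuous_rpow_const (y := 1 / (2 : ℝ))).tendsto 0
        simpa [ENNReal.zero_rpow_of_pos (by norm_num : (0:ℝ) < 1 / 2)] using this
      exact hcont.comp hI
    -- conclude
    have htend' : Tendsto (fun n => g (n + 1)) atTop (𝓝 f) :=
      htend.comp (tendsto_add_atTop_nat 1)
    exact mem_closure_of_tendsto htend'
      (Eventually.of_forall fun n => hgmem (n + 1) (Nat.succ_le_succ (Nat.zero_le n)))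

end Stmt15
end

section
/- Let θ = p/q be a positive rational with gcd(p,q) = 1, and let φ : ℤ² → ℤ² be the isomorphism given by a matrix [[x, y], [z, w]] ∈ SL₂(ℤ) with nonnegative entries satisfying x + z = q and y + w = p (so φ(ℕ²) ⊆ ℕ²). For G = ℤ², P = ℕ², the map Φ : Y_u → Y_u, Φ(A) := φ^{-1}(A), is well defined, injective, continuous, equivariant in the sense that Φ(A + φ(v)) = Φ(A) + v for all v ∈ ℤ², and proper, i.e. Φ^{-1}(K) is compact for every compact K ⊆ Y_u. Consequently, for every β ∈ ℝ, if μ is an ergodic e^{-(β/q)c₁}-conformal nonzero Radon measure on Y_u of type II_∞, then the pushforward μ ∘ Φ^{-1} is an ergodic e^{-βc_θ}-conformal nonzero Radon measure on Y_u of type II_∞. -/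
/-!
STATEMENT 16. Let θ = p/q > 0 with gcd(p,q) = 1 and let φ : ℤ² → ℤ² be given by a
matrix [[x,y],[z,w]] ∈ SL₂(ℤ) with nonnegative entries, x + z = q, y + w = p
(so φ(ℕ²) ⊆ ℕ²). For G = ℤ², P = ℕ², the map Φ : Y_u → Y_u, Φ(A) = φ^{-1}(A), is
well defined, injective, continuous, equivariant (Φ(A + φ(v)) = Φ(A) + v) and
proper. Consequently, for every β ∈ ℝ, if μ is an ergodic e^{-(β/q)c₁}-conformal
nonzero Radon measure on Y_u of type II_∞, then μ ∘ Φ^{-1} is an ergodic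
e^{-βc_θ}-conformal nonzero Radon measure on Y_u of type II_∞.
-/

open MeasureTheory Real Set
open scoped ENNReal NNReal

namespace Stmt16

/-- Translation "A + v" of a subset of ℤ², encoded as a Bool-valued function. -/
def transl (v : ℤ × ℤ) (A : (ℤ × ℤ) → Bool) : (ℤ × ℤ) → Bool := fun p => A (p - v)

/-- P = ℕ² inside ℤ². -/
def Pnn : Set (ℤ × ℤ) := {v | 0 ≤ v.1 ∧ 0 ≤ v.2}

/-- Y_u = {A ⊆ ℤ² : A ≠ ∅, A ≠ ℤ², -ℕ² + A ⊆ A}. -/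
def Yu : Set ((ℤ × ℤ) → Bool) :=
  {A | (∃ v, A v = true) ∧ (∃ v, A v = false) ∧
    ∀ v : ℤ × ℤ, ∀ q ∈ Pnn, A v = true → A (v - q) = true}

/-- The homomorphism c_θ : ℤ² → ℝ, c_θ(m,n) = m + nθ. -/
noncomputable def cHom (θ : ℝ) (v : ℤ × ℤ) : ℝ := (v.1 : ℝ) + (v.2 : ℝ) * θ

def ConcYu (μ : Measure ((ℤ × ℤ) → Bool)) : Prop := μ (Yuᶜ) = 0

def IsRadonYu (μ : Measure ((ℤ × ℤ) → Bool)) : Prop :=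
  ∀ K : Set ((ℤ × ℤ) → Bool), IsCompact K → K ⊆ Yu → μ K < ⊤

def IsConformal (c : (ℤ × ℤ) → ℝ) (β : ℝ) (μ : Measure ((ℤ × ℤ) → Bool)) : Prop :=
  ∀ v : ℤ × ℤ, ∀ E : Set ((ℤ × ℤ) → Bool), MeasurableSet E →
    μ (transl v '' E) = ENNReal.ofReal (Real.exp (-(β * c v))) * μ E

def IsInvariant (ν : Measure ((ℤ × ℤ) → Bool)) : Prop :=
  ∀ v : ℤ × ℤ, ∀ E : Set ((ℤ × ℤ) → Bool), MeasurableSet E → ν (transl v '' E) = ν E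

def IsErgodicZ2 (μ : Measure ((ℤ × ℤ) → Bool)) : Prop :=
  ∀ E : Set ((ℤ × ℤ) → Bool), MeasurableSet E → (∀ v : ℤ × ℤ, transl v '' E = E) →
    μ E = 0 ∨ μ Eᶜ = 0

/-- The ℤ²-orbit of a point of Y_u. -/
def orbit (A : (ℤ × ℤ) → Bool) : Set ((ℤ × ℤ) → Bool) := {B | ∃ v : ℤ × ℤ, B = transl v A}

/-- μ is of type II_∞ : not concentrated on a single orbit, its class contains a
σ-finite invariant measure, but no nonzero invariant Radon measure. -/
def IsTypeIIinf (μ : Measure ((ℤ × ℤ) → Bool)) : Prop :=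
  (¬ ∃ A : (ℤ × ℤ) → Bool, μ ((orbit A)ᶜ) = 0) ∧
  (∃ ν : Measure ((ℤ × ℤ) → Bool), SigmaFinite ν ∧ IsInvariant ν ∧ ν ≪ μ ∧ μ ≪ ν) ∧
  (¬ ∃ ν : Measure ((ℤ × ℤ) → Bool), ν ≠ 0 ∧ ConcYu ν ∧ IsRadonYu ν ∧
      IsInvariant ν ∧ ν ≪ μ ∧ μ ≪ ν)

/-- The isomorphism φ of ℤ² given by the matrix [[x,y],[z,w]]. -/
def phi (x y z w : ℕ) (v : ℤ × ℤ) : ℤ × ℤ :=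
  ((x : ℤ) * v.1 + (y : ℤ) * v.2, (z : ℤ) * v.1 + (w : ℤ) * v.2)

/-- Φ(A) = φ^{-1}(A). -/
def Phi (x y z w : ℕ) (A : (ℤ × ℤ) → Bool) : (ℤ × ℤ) → Bool := fun v => A (phi x y z w v)

-- auxiliary
def psi (x y z w : ℕ) (v : ℤ × ℤ) : ℤ × ℤ :=
  ((w : ℤ) * v.1 - (y : ℤ) * v.2, -(z : ℤ) * v.1 + (x : ℤ) * v.2)

def PhiInv (x y z w : ℕ) (A : (ℤ × ℤ) → Bool) : (ℤ × ℤ) → Bool :=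
  fun v => A (psi x y z w v)

section AuxLemmas
variable {x y z w : ℕ}

lemma phi_psi (hdet : (x : ℤ) * (w : ℤ) - (y : ℤ) * (z : ℤ) = 1) (v : ℤ × ℤ) :
    phi x y z w (psi x y z w v) = v := by
  simp only [phi, psi]
  refine Prod.ext ?_ ?_ <;> simp only []
  · linear_combination v.1 * hdet
  · linear_combination v.2 * hdet

lemma psi_phi (hdet : (x : ℤ) * (w : ℤ) - (y : ℤ) * (z : ℤ) = 1) (v : ℤ × ℤ) :
    psi x y z w (phi x y z w v) = v := by
  simp only [phi, psi]
  refine Prod.ext ?_ ?_ <;> simp only []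
  · linear_combination v.1 * hdet
  · linear_combination v.2 * hdet

lemma phi_sub (u v : ℤ × ℤ) :
    phi x y z w (u - v) = phi x y z w u - phi x y z w v := by
  simp only [phi, Prod.fst_sub, Prod.snd_sub, Prod.mk_sub_mk]
  refine Prod.ext ?_ ?_ <;> simp only [] <;> ring

lemma phi_neg (v : ℤ × ℤ) : phi x y z w (-v) = -phi x y z w v := by
  simp only [phi]
  refine Prod.ext ?_ ?_ <;> simp <;> ring

lemma psi_neg (v : ℤ × ℤ) : psi x y z w (-v) = -psi x y z w v := by
  simp only [psi]
  refine Prod.ext ?_ ?_ <;> simp <;> ring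

lemma transl_transl (u v : ℤ × ℤ) (A : (ℤ × ℤ) → Bool) :
    transl u (transl v A) = transl (u + v) A := by
  funext p; simp only [transl, sub_sub]

lemma transl_zero (A : (ℤ × ℤ) → Bool) : transl 0 A = A := by
  funext p; simp [transl]

lemma transl_image (v : ℤ × ℤ) (E : Set ((ℤ × ℤ) → Bool)) :
    transl v '' E = transl (-v) ⁻¹' E := by
  ext A
  constructor
  · rintro ⟨B, hB, rfl⟩
    show transl (-v) (transl v B) ∈ E
    rw [transl_transl, neg_add_cancel, transl_zero]; exact hB
  · intro hA
    exact ⟨transl (-v) A, hA, by rw [transl_transl, add_neg_cancel, transl_zero]⟩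

lemma Phi_transl (A : (ℤ × ℤ) → Bool) (v : ℤ × ℤ) :
    Phi x y z w (transl (phi x y z w v) A) = transl v (Phi x y z w A) := by
  funext u
  show A (phi x y z w u - phi x y z w v) = A (phi x y z w (u - v))
  rw [phi_sub]

lemma Phi_comp_transl (v : ℤ × ℤ) :
    Phi x y z w ∘ transl (phi x y z w v) = transl v ∘ Phi x y z w := by
  funext A; exact Phi_transl A v

lemma Phi_preimage_transl_image (v : ℤ × ℤ) (E : Set ((ℤ × ℤ) → Bool)) :
    Phi x y z w ⁻¹' (transl v '' E) = transl (phi x y z w v) '' (Phi x y z w ⁻¹' E) := by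
  have h : transl (-v) ∘ Phi x y z w = Phi x y z w ∘ transl (-(phi x y z w v)) := by
    rw [← phi_neg]; exact (Phi_comp_transl (-v)).symm
  rw [transl_image, transl_image, ← Set.preimage_comp, ← Set.preimage_comp, h]

lemma PhiInv_Phi (hdet : (x : ℤ) * (w : ℤ) - (y : ℤ) * (z : ℤ) = 1)
    (A : (ℤ × ℤ) → Bool) : PhiInv x y z w (Phi x y z w A) = A := by
  funext v
  show A (phi x y z w (psi x y z w v)) = A v
  rw [phi_psi hdet]

lemma Phi_PhiInv (hdet : (x : ℤ) * (w : ℤ) - (y : ℤ) * (z : ℤ) = 1)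
    (A : (ℤ × ℤ) → Bool) : Phi x y z w (PhiInv x y z w A) = A := by
  funext v
  show A (psi x y z w (phi x y z w v)) = A v
  rw [psi_phi hdet]

lemma Phi_continuous : Continuous (Phi x y z w) :=
  continuous_pi fun v => continuous_apply (phi x y z w v)

lemma PhiInv_continuous : Continuous (PhiInv x y z w) :=
  continuous_pi fun v => continuous_apply (psi x y z w v)

/-- Φ as a homeomorphism of the full space. -/
def PhiHomeo (hdet : (x : ℤ) * (w : ℤ) - (y : ℤ) * (z : ℤ) = 1) :
    ((ℤ × ℤ) → Bool) ≃ₜ ((ℤ × ℤ) → Bool) where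
  toFun := Phi x y z w
  invFun := PhiInv x y z w
  left_inv := PhiInv_Phi hdet
  right_inv := Phi_PhiInv hdet
  continuous_toFun := Phi_continuous
  continuous_invFun := PhiInv_continuous


lemma Phi_injective (hdet : (x : ℤ) * (w : ℤ) - (y : ℤ) * (z : ℤ) = 1) :
    Function.Injective (Phi x y z w) :=
  Function.LeftInverse.injective (PhiInv_Phi hdet)

lemma PhiInv_comp_transl (hdet : (x : ℤ) * (w : ℤ) - (y : ℤ) * (z : ℤ) = 1)
    (v : ℤ × ℤ) :
    PhiInv x y z w ∘ transl v = transl (phi x y z w v) ∘ PhiInv x y z w := by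
  funext A
  apply Phi_injective hdet
  show Phi x y z w (PhiInv x y z w (transl v A))
      = Phi x y z w (transl (phi x y z w v) (PhiInv x y z w A))
  rw [Phi_PhiInv hdet, Phi_transl, Phi_PhiInv hdet]

lemma PhiInv_preimage_transl_image (hdet : (x : ℤ) * (w : ℤ) - (y : ℤ) * (z : ℤ) = 1)
    (v : ℤ × ℤ) (E : Set ((ℤ × ℤ) → Bool)) :
    PhiInv x y z w ⁻¹' (transl v '' E) = transl (psi x y z w v) '' (PhiInv x y z w ⁻¹' E) := by
  have h : transl (-v) ∘ PhiInv x y z w = PhiInv x y z w ∘ transl (-(psi x y z w v)) := by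
    have h2 := PhiInv_comp_transl hdet (x := x) (y := y) (z := z) (w := w)
      (-(psi x y z w v))
    rw [h2, phi_neg, phi_psi hdet]
  rw [transl_image, transl_image, ← Set.preimage_comp, ← Set.preimage_comp, h]

lemma phi_mem_Pnn (r : ℤ × ℤ) (hr : r ∈ Pnn) : phi x y z w r ∈ Pnn := by
  refine ⟨?_, ?_⟩ <;> simp only [phi] <;>
    exact add_nonneg (mul_nonneg (Int.natCast_nonneg _) hr.1)
      (mul_nonneg (Int.natCast_nonneg _) hr.2)

lemma Phi_mapsTo (hdet : (x : ℤ) * (w : ℤ) - (y : ℤ) * (z : ℤ) = 1) :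
    Set.MapsTo (Phi x y z w) Yu Yu := by
  intro A hA
  obtain ⟨⟨v₁, hv₁⟩, ⟨v₂, hv₂⟩, hmono⟩ := hA
  refine ⟨⟨psi x y z w v₁, ?_⟩, ⟨psi x y z w v₂, ?_⟩, ?_⟩
  · show A (phi x y z w (psi x y z w v₁)) = true
    rw [phi_psi hdet]; exact hv₁
  · show A (phi x y z w (psi x y z w v₂)) = false
    rw [phi_psi hdet]; exact hv₂
  · intro v r hr hv
    show A (phi x y z w (v - r)) = true
    rw [phi_sub]
    exact hmono _ _ (phi_mem_Pnn r hr) hv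

/-- The monotonicity part of Yu, a closed set. -/
def Mset : Set ((ℤ × ℤ) → Bool) :=
  {A | ∀ v : ℤ × ℤ, ∀ q ∈ Pnn, A v = true → A (v - q) = true}

lemma Mset_closed : IsClosed Mset := by
  have : Mset = ⋂ (v : ℤ × ℤ), ⋂ (r : ℤ × ℤ), ⋂ (_ : r ∈ Pnn),
      ((fun A : (ℤ × ℤ) → Bool => (A v, A (v - r))) ⁻¹'
        {p : Bool × Bool | p.1 = true → p.2 = true}) := by
    ext A
    simp only [Mset, Set.mem_setOf_eq, Set.mem_iInter, Set.mem_preimage]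
  rw [this]
  refine isClosed_iInter fun v => isClosed_iInter fun r => isClosed_iInter fun _ => ?_
  exact (isClosed_discrete _).preimage ((continuous_apply v).prodMk (continuous_apply (v - r)))

lemma proper_aux (K : Set ((ℤ × ℤ) → Bool)) (hK : IsCompact K) (hKYu : K ⊆ Yu) :
    IsCompact (Yu ∩ Phi x y z w ⁻¹' K) := by
  have heq : Yu ∩ Phi x y z w ⁻¹' K = Mset ∩ Phi x y z w ⁻¹' K := by
    ext A
    constructor
    · rintro ⟨hA, hAK⟩; exact ⟨hA.2.2, hAK⟩
    · rintro ⟨hA, hAK⟩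
      obtain ⟨⟨v₁, hv₁⟩, ⟨v₂, hv₂⟩, -⟩ := hKYu hAK
      exact ⟨⟨⟨phi x y z w v₁, hv₁⟩, ⟨phi x y z w v₂, hv₂⟩, hA⟩, hAK⟩
  rw [heq]
  exact (Mset_closed.inter (hK.isClosed.preimage Phi_continuous)).isCompact



lemma Phi_measurable : Measurable (Phi x y z w) := Phi_continuous.measurable

lemma PhiInv_measurable : Measurable (PhiInv x y z w) := PhiInv_continuous.measurable

/-- Φ as a measurable equivalence. -/
noncomputable def PhiME (hdet : (x : ℤ) * (w : ℤ) - (y : ℤ) * (z : ℤ) = 1) :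
    ((ℤ × ℤ) → Bool) ≃ᵐ ((ℤ × ℤ) → Bool) := (PhiHomeo hdet).toMeasurableEquiv

lemma map_Phi_apply (hdet : (x : ℤ) * (w : ℤ) - (y : ℤ) * (z : ℤ) = 1)
    (μ : Measure ((ℤ × ℤ) → Bool)) (s : Set ((ℤ × ℤ) → Bool)) :
    (Measure.map (Phi x y z w) μ) s = μ (Phi x y z w ⁻¹' s) := by
  have : Phi x y z w = ⇑(PhiME hdet) := rfl
  rw [this, MeasurableEquiv.map_apply]

lemma map_PhiInv_apply (hdet : (x : ℤ) * (w : ℤ) - (y : ℤ) * (z : ℤ) = 1)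
    (μ : Measure ((ℤ × ℤ) → Bool)) (s : Set ((ℤ × ℤ) → Bool)) :
    (Measure.map (PhiInv x y z w) μ) s = μ (PhiInv x y z w ⁻¹' s) := by
  have : PhiInv x y z w = ⇑(PhiME hdet).symm := rfl
  rw [this, MeasurableEquiv.map_apply]

lemma cHom_phi {p q : ℕ} (hq : 0 < q) (hxz : x + z = q) (hyw : y + w = p)
    (β : ℝ) (v : ℤ × ℤ) :
    β / (q : ℝ) * cHom 1 (phi x y z w v) = β * cHom ((p : ℝ) / (q : ℝ)) v := by
  have hq' : (q : ℝ) ≠ 0 := by positivity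
  have hx : (x : ℝ) + (z : ℝ) = (q : ℝ) := by exact_mod_cast hxz
  have hy : (y : ℝ) + (w : ℝ) = (p : ℝ) := by exact_mod_cast hyw
  have hc : cHom 1 (phi x y z w v) = (q : ℝ) * (v.1 : ℝ) + (p : ℝ) * (v.2 : ℝ) := by
    simp only [cHom, phi]
    push_cast
    linear_combination (v.1 : ℝ) * hx + (v.2 : ℝ) * hy
  rw [hc]
  simp only [cHom]
  field_simp

end AuxLemmas

theorem stmt16 (p q : ℕ) (hp : 0 < p) (hq : 0 < q) (hcop : Nat.gcd p q = 1)
    (x y z w : ℕ) (hdet : (x : ℤ) * (w : ℤ) - (y : ℤ) * (z : ℤ) = 1)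
    (hxz : x + z = q) (hyw : y + w = p) :
    -- Φ is a well-defined, injective, continuous, equivariant, proper map Y_u → Y_u:
    Set.MapsTo (Phi x y z w) Yu Yu ∧
    Set.InjOn (Phi x y z w) Yu ∧
    ContinuousOn (Phi x y z w) Yu ∧
    (∀ A : (ℤ × ℤ) → Bool, ∀ v : ℤ × ℤ,
      Phi x y z w (transl (phi x y z w v) A) = transl v (Phi x y z w A)) ∧
    (∀ K : Set ((ℤ × ℤ) → Bool), IsCompact K → K ⊆ Yu →
      IsCompact (Yu ∩ Phi x y z w ⁻¹' K)) ∧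
    -- consequence on conformal measures:
    (∀ β : ℝ, ∀ μ : Measure ((ℤ × ℤ) → Bool),
      μ ≠ 0 → ConcYu μ → IsRadonYu μ → IsErgodicZ2 μ →
      IsConformal (cHom 1) (β / (q : ℝ)) μ → IsTypeIIinf μ →
      (Measure.map (Phi x y z w) μ ≠ 0 ∧ ConcYu (Measure.map (Phi x y z w) μ) ∧
        IsRadonYu (Measure.map (Phi x y z w) μ) ∧
        IsErgodicZ2 (Measure.map (Phi x y z w) μ) ∧
        IsConformal (cHom ((p : ℝ) / (q : ℝ))) β (Measure.map (Phi x y z w) μ) ∧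
        IsTypeIIinf (Measure.map (Phi x y z w) μ))) := by

  refine ⟨Phi_mapsTo hdet, (Phi_injective hdet).injOn, Phi_continuous.continuousOn,
    fun A v => Phi_transl A v, fun K hK hKYu => proper_aux K hK hKYu, ?_⟩
  intro β μ hne hconc hrad herg hconf hII
  have hmap : ∀ s, (Measure.map (Phi x y z w) μ) s = μ (Phi x y z w ⁻¹' s) :=
    map_Phi_apply hdet μ
  refine ⟨?_, ?_, ?_, ?_, ?_, ?_, ?_, ?_⟩
  · -- nonzero
    intro h0
    apply hne
    rw [← Measure.measure_univ_eq_zero]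
    have h := hmap Set.univ
    rw [h0] at h
    simpa using h.symm
  · -- ConcYu
    show (Measure.map (Phi x y z w) μ) Yuᶜ = 0
    rw [hmap]
    refine measure_mono_null (fun A hA => ?_) hconc
    exact fun hAYu => hA (Phi_mapsTo hdet hAYu)
  · -- Radon
    intro K hK hKYu
    rw [hmap]
    have h1 : μ (Phi x y z w ⁻¹' K) ≤ μ (Yu ∩ Phi x y z w ⁻¹' K) + μ Yuᶜ := by
      refine le_trans (measure_mono fun A hA => ?_) (measure_union_le _ _)
      by_cases h : A ∈ Yu
      · exact Or.inl ⟨h, hA⟩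
      · exact Or.inr h
    rw [show μ Yuᶜ = 0 from hconc, add_zero] at h1
    exact lt_of_le_of_lt h1 (hrad _ (proper_aux K hK hKYu) Set.inter_subset_left)
  · -- ergodic
    intro E hE hEinv
    have hF : MeasurableSet (Phi x y z w ⁻¹' E) := Phi_measurable hE
    have hFinv : ∀ v : ℤ × ℤ, transl v '' (Phi x y z w ⁻¹' E) = Phi x y z w ⁻¹' E := by
      intro v
      have h := Phi_preimage_transl_image (x := x) (y := y) (z := z) (w := w)
        (psi x y z w v) E
      rw [phi_psi hdet, hEinv (psi x y z w v)] at h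
      exact h.symm
    rcases herg _ hF hFinv with h | h
    · left; rw [hmap]; exact h
    · right; rw [hmap, Set.preimage_compl]; exact h
  · -- conformal
    intro v E hE
    rw [hmap, hmap, Phi_preimage_transl_image,
      hconf (phi x y z w v) _ (Phi_measurable hE), cHom_phi hq hxz hyw]
  · -- type II_inf, part 1
    rintro ⟨A, hA⟩
    apply hII.1
    refine ⟨PhiInv x y z w A, ?_⟩
    rw [hmap] at hA
    have horb : Phi x y z w ⁻¹' (orbit A)ᶜ = (orbit (PhiInv x y z w A))ᶜ := by
      rw [Set.preimage_compl]
      congr 1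
      ext B
      constructor
      · rintro ⟨v, hv⟩
        refine ⟨phi x y z w v, ?_⟩
        have h := congrFun (PhiInv_comp_transl hdet v) A
        simp only [Function.comp_apply] at h
        rw [← h, ← hv, PhiInv_Phi hdet]
      · rintro ⟨v, rfl⟩
        refine ⟨psi x y z w v, ?_⟩
        show Phi x y z w (transl v (PhiInv x y z w A)) = transl (psi x y z w v) A
        conv_lhs => rw [show v = phi x y z w (psi x y z w v) from (phi_psi hdet v).symm]
        rw [Phi_transl, Phi_PhiInv hdet]
    rw [horb] at hA
    exact hA
  · -- type II_inf, part 2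
    obtain ⟨ν, hσ, hνinv, hν1, hν2⟩ := hII.2.1
    have hmapν : ∀ s, (Measure.map (Phi x y z w) ν) s = ν (Phi x y z w ⁻¹' s) :=
      map_Phi_apply hdet ν
    refine ⟨Measure.map (Phi x y z w) ν, ?_, ?_, ?_, ?_⟩
    · haveI := hσ
      exact (PhiME (x := x) (y := y) (z := z) (w := w) hdet).sigmaFinite_map
    · intro v E hE
      rw [hmapν, hmapν, Phi_preimage_transl_image]
      exact hνinv _ _ (Phi_measurable hE)
    · intro s hs
      rw [hmap] at hs
      rw [hmapν]
      exact hν1 hs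
    · intro s hs
      rw [hmapν] at hs
      rw [hmap]
      exact hν2 hs
  · -- type II_inf, part 3
    rintro ⟨ν', hne', hconc', hrad', hinv', h1', h2'⟩
    apply hII.2.2
    have hmapν' : ∀ s, (Measure.map (PhiInv x y z w) ν') s = ν' (PhiInv x y z w ⁻¹' s) :=
      map_PhiInv_apply hdet ν'
    refine ⟨Measure.map (PhiInv x y z w) ν', ?_, ?_, ?_, ?_, ?_, ?_⟩
    · intro h0
      apply hne'
      rw [← Measure.measure_univ_eq_zero]
      have h := hmapν' Set.univ
      rw [h0] at h
      simpa using h.symm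
    · -- ConcYu
      show (Measure.map (PhiInv x y z w) ν') Yuᶜ = 0
      rw [hmapν', Set.preimage_compl]
      have key : Phi x y z w ⁻¹' ((PhiInv x y z w ⁻¹' Yu)ᶜ ∩ Yu) ⊆ Yuᶜ := by
        rintro A ⟨hA1, -⟩ hAYu
        apply hA1
        show PhiInv x y z w (Phi x y z w A) ∈ Yu
        rw [PhiInv_Phi hdet]
        exact hAYu
      have hS0 : (Measure.map (Phi x y z w) μ) ((PhiInv x y z w ⁻¹' Yu)ᶜ ∩ Yu) = 0 := by
        rw [hmap]
        exact measure_mono_null key hconc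
      have hS0' : ν' ((PhiInv x y z w ⁻¹' Yu)ᶜ ∩ Yu) = 0 := h1' hS0
      refine le_antisymm ?_ (zero_le ..)
      calc ν' (PhiInv x y z w ⁻¹' Yu)ᶜ
          ≤ ν' (((PhiInv x y z w ⁻¹' Yu)ᶜ ∩ Yu) ∪ Yuᶜ) := by
            refine measure_mono fun A hA => ?_
            by_cases h : A ∈ Yu
            · exact Or.inl ⟨hA, h⟩
            · exact Or.inr h
        _ ≤ ν' ((PhiInv x y z w ⁻¹' Yu)ᶜ ∩ Yu) + ν' Yuᶜ := measure_union_le _ _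
        _ = 0 := by rw [hS0', show ν' Yuᶜ = 0 from hconc', add_zero]
    · -- Radon
      intro K hK hKYu
      rw [hmapν']
      have himg : PhiInv x y z w ⁻¹' K = Phi x y z w '' K := by
        ext A
        constructor
        · intro hA
          exact ⟨PhiInv x y z w A, hA, Phi_PhiInv hdet A⟩
        · rintro ⟨B, hB, rfl⟩
          show PhiInv x y z w (Phi x y z w B) ∈ K
          rw [PhiInv_Phi hdet]
          exact hB
      rw [himg]
      refine hrad' _ (hK.image Phi_continuous) ?_
      rintro B ⟨C, hC, rfl⟩
      exact Phi_mapsTo hdet (hKYu hC)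
    · -- invariant
      intro v E hE
      rw [hmapν', hmapν', PhiInv_preimage_transl_image hdet]
      exact hinv' _ _ (PhiInv_measurable hE)
    · -- ≪
      intro s hs
      rw [hmapν']
      apply h1'
      rw [hmap]
      refine measure_mono_null (fun A hA => ?_) hs
      simp only [Set.mem_preimage] at hA
      rwa [PhiInv_Phi hdet] at hA
    · intro s hs
      rw [hmapν'] at hs
      have h := h2' hs
      rw [hmap] at h
      refine measure_mono_null (fun A hA => ?_) h
      show PhiInv x y z w (Phi x y z w A) ∈ s
      rw [PhiInv_Phi hdet]
      exact hA


end Stmt16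
end

section
/- Let θ > 0, β ∈ ℝ, G = ℤ², P = ℕ², and let μ be an ergodic e^{-βc_θ}-conformal nonzero Radon measure on Y_u. Suppose μ is concentrated on the ℤ²-orbit of a point A ∈ Y_u, i.e. μ(Y_u \ {A + v : v ∈ ℤ²}) = 0, and suppose the stabilizer G_A := {v ∈ ℤ² : A + v = A} is nonzero. Then there exists a nonzero ℤ²-invariant Radon measure on Y_u mutually absolutely continuous with μ (equivalently, the isometric representation V^{μ} is 1-conformal). -/
/-!
STATEMENT 18. Let θ > 0, β ∈ ℝ, G = ℤ², P = ℕ², and μ an ergodic e^{-βc_θ}-conformal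
nonzero Radon measure on Y_u. Suppose μ is concentrated on the ℤ²-orbit of a point
A ∈ Y_u whose stabilizer G_A = {v : A + v = A} is nonzero. Then there is a nonzero
ℤ²-invariant Radon measure on Y_u mutually absolutely continuous with μ
(equivalently, the isometric representation V^{μ} is 1-conformal).
-/

open MeasureTheory Real Set
open scoped ENNReal NNReal

namespace Stmt18

def transl (v : ℤ × ℤ) (A : (ℤ × ℤ) → Bool) : (ℤ × ℤ) → Bool := fun p => A (p - v)

def Pnn : Set (ℤ × ℤ) := {v | 0 ≤ v.1 ∧ 0 ≤ v.2}

def Yu : Set ((ℤ × ℤ) → Bool) :=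
  {A | (∃ v, A v = true) ∧ (∃ v, A v = false) ∧
    ∀ v : ℤ × ℤ, ∀ q ∈ Pnn, A v = true → A (v - q) = true}

def Xu : Set ((ℤ × ℤ) → Bool) := {A ∈ Yu | A 0 = true}

def XuAdd (a : ℤ × ℤ) : Set ((ℤ × ℤ) → Bool) := transl a '' Xu

noncomputable def cHom (θ : ℝ) (v : ℤ × ℤ) : ℝ := (v.1 : ℝ) + (v.2 : ℝ) * θ

def ConcYu (μ : Measure ((ℤ × ℤ) → Bool)) : Prop := μ (Yuᶜ) = 0

def IsRadonYu (μ : Measure ((ℤ × ℤ) → Bool)) : Prop :=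
  ∀ K : Set ((ℤ × ℤ) → Bool), IsCompact K → K ⊆ Yu → μ K < ⊤

def IsConformal (c : (ℤ × ℤ) → ℝ) (β : ℝ) (μ : Measure ((ℤ × ℤ) → Bool)) : Prop :=
  ∀ v : ℤ × ℤ, ∀ E : Set ((ℤ × ℤ) → Bool), MeasurableSet E →
    μ (transl v '' E) = ENNReal.ofReal (Real.exp (-(β * c v))) * μ E

def IsInvariant (ν : Measure ((ℤ × ℤ) → Bool)) : Prop :=
  ∀ v : ℤ × ℤ, ∀ E : Set ((ℤ × ℤ) → Bool), MeasurableSet E → ν (transl v '' E) = ν E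

def IsErgodicZ2 (μ : Measure ((ℤ × ℤ) → Bool)) : Prop :=
  ∀ E : Set ((ℤ × ℤ) → Bool), MeasurableSet E → (∀ v : ℤ × ℤ, transl v '' E = E) →
    μ E = 0 ∨ μ Eᶜ = 0

def orbit (A : (ℤ × ℤ) → Bool) : Set ((ℤ × ℤ) → Bool) := {B | ∃ v : ℤ × ℤ, B = transl v A}

abbrev Om := (ℤ × ℤ) → Bool

lemma transl_apply (v : ℤ×ℤ) (A : Om) (p : ℤ×ℤ) : transl v A p = A (p - v) := rfl

lemma transl_transl (u v : ℤ×ℤ) (A : Om) : transl u (transl v A) = transl (u + v) A := by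
  funext p; simp [transl, sub_sub]

lemma transl_zero (A : Om) : transl 0 A = A := by funext p; simp [transl]

lemma transl_cancel (v : ℤ×ℤ) (A : Om) : transl (-v) (transl v A) = A := by
  rw [transl_transl]; simp [transl_zero]

lemma transl_cancel' (v : ℤ×ℤ) (A : Om) : transl v (transl (-v) A) = A := by
  rw [transl_transl]; simp [transl_zero]

lemma transl_eq_iff {v : ℤ×ℤ} {A B : Om} : transl v A = B ↔ A = transl (-v) B := by
  constructor
  · rintro rfl; rw [transl_cancel]
  · rintro rfl; rw [transl_cancel']

lemma image_transl (v : ℤ×ℤ) (E : Set Om) : transl v '' E = transl (-v) ⁻¹' E := by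
  ext B
  constructor
  · rintro ⟨C, hC, rfl⟩; simpa [Set.mem_preimage, transl_cancel] using hC
  · intro h; exact ⟨transl (-v) B, h, transl_cancel' v B⟩

lemma measurable_transl (v : ℤ×ℤ) : Measurable (transl v) :=
  measurable_pi_lambda _ (fun p => measurable_pi_apply (p - v))

lemma measurableSet_image_transl {v : ℤ×ℤ} {E : Set Om} (hE : MeasurableSet E) :
    MeasurableSet (transl v '' E) := by
  rw [image_transl]; exact (measurable_transl (-v)) hE

lemma measurableSet_coord (v : ℤ×ℤ) (b : Bool) : MeasurableSet {B : Om | B v = b} := by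
  have : {B : Om | B v = b} = (fun B : Om => B v) ⁻¹' {b} := rfl
  rw [this]
  exact (measurable_pi_apply v) (MeasurableSet.singleton b)

lemma measurableSet_Yu : MeasurableSet Yu := by
  have h : Yu = (⋃ v, {B : Om | B v = true}) ∩ ((⋃ v, {B : Om | B v = false}) ∩
      ⋂ v, ⋂ (q : ℤ×ℤ), ⋂ (_ : q ∈ Pnn), ({B : Om | B v = true}ᶜ ∪ {B : Om | B (v - q) = true})) := by
    ext B
    simp only [Yu, Set.mem_setOf_eq, Set.mem_inter_iff, Set.mem_iUnion, Set.mem_iInter,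
      Set.mem_union, Set.mem_compl_iff]
    constructor
    · rintro ⟨h1, h2, h3⟩
      exact ⟨h1, h2, fun v q hq => by by_cases h : B v = true
                                      · exact Or.inr (h3 v q hq h)
                                      · exact Or.inl h⟩
    · rintro ⟨h1, h2, h3⟩
      refine ⟨h1, h2, fun v q hq hv => ?_⟩
      rcases h3 v q hq with h | h
      · exact absurd hv h
      · exact h
  rw [h]
  exact (MeasurableSet.iUnion fun v => measurableSet_coord v true).inter
    ((MeasurableSet.iUnion fun v => measurableSet_coord v false).inter
      (MeasurableSet.iInter fun v => MeasurableSet.iInter fun q => MeasurableSet.iInter fun _ =>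
        (measurableSet_coord v true).compl.union (measurableSet_coord (v - q) true)))

lemma measurableSet_Xu : MeasurableSet Xu :=
  measurableSet_Yu.inter (measurableSet_coord 0 true)

lemma mem_Yu_transl {A : Om} (hA : A ∈ Yu) (v : ℤ×ℤ) : transl v A ∈ Yu := by
  obtain ⟨⟨p1, h1⟩, ⟨p2, h2⟩, h3⟩ := hA
  refine ⟨⟨p1 + v, by simpa [transl_apply]⟩, ⟨p2 + v, by simpa [transl_apply]⟩, ?_⟩
  intro w q hq hw
  simp only [transl_apply] at hw ⊢
  have := h3 (w - v) q hq hw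
  simpa [sub_right_comm] using this

lemma orbit_eq_range (A : Om) : orbit A = Set.range (fun v => transl v A) := by
  ext B; simp [orbit, Set.range, eq_comm]

lemma measurableSet_orbit (A : Om) : MeasurableSet (orbit A) := by
  rw [orbit_eq_range]
  exact (Set.countable_range _).measurableSet

lemma mem_XuAdd_iff {a : ℤ×ℤ} {B : Om} (hB : B ∈ Yu) : B ∈ XuAdd a ↔ B a = true := by
  constructor
  · rintro ⟨C, ⟨hC, hC0⟩, rfl⟩
    simpa [transl_apply] using hC0
  · intro h
    refine ⟨transl (-a) B, ⟨mem_Yu_transl hB _, ?_⟩, transl_cancel' a B⟩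
    simpa [transl_apply] using h




lemma down {A : Om} (hA : A ∈ Yu) {v w : ℤ×ℤ} (h1 : v.1 ≤ w.1) (h2 : v.2 ≤ w.2)
    (hw : A w = true) : A v = true := by
  obtain ⟨-, -, h3⟩ := hA
  have := h3 w (w - v) ⟨by simp [Pnn]; omega, by simp [Pnn]; omega⟩ hw
  simpa using this

lemma periodic_pt {A : Om} {s : ℤ×ℤ} (hs : transl s A = A) (k : ℤ) (v : ℤ×ℤ) :
    A (v + k • s) = A v := by
  have hfwd : ∀ w : ℤ×ℤ, A (w + s) = A w := by
    intro w
    have := congrFun hs (w + s)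
    simpa [transl_apply] using this.symm
  have hbwd : ∀ w : ℤ×ℤ, A (w - s) = A w := by
    intro w
    have := congrFun hs w
    simpa [transl_apply] using this
  induction k using Int.induction_on with
  | zero => simp
  | succ k ih =>
      have : v + (k + 1 : ℤ) • s = (v + (k:ℤ) • s) + s := by
        rw [add_smul, one_smul]; abel
      rw [this, hfwd, ih]
  | pred k ih =>
      have : v + (-k - 1 : ℤ) • s = (v + (-k:ℤ) • s) - s := by
        rw [sub_smul, one_smul]; abel
      rw [this, hbwd, ih]

lemma smul_pair (k : ℤ) (s : ℤ×ℤ) : k • s = (k * s.1, k * s.2) := by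
  ext <;> simp [Prod.smul_fst, Prod.smul_snd, zsmul_eq_mul]

/-- integer "reach" lemma -/
lemma reach (a b' : ℤ) (ha : 0 < a) (hb : 0 ≤ b') (x v : ℤ×ℤ)
    (h : b' * v.1 + a * v.2 ≤ b' * x.1 + a * x.2 - a * b') :
    ∃ k : ℤ, v.1 ≤ x.1 + k * a ∧ v.2 ≤ x.2 + k * (-b') := by
  set n : ℤ := v.1 - x.1 + a - 1 with hn
  refine ⟨n / a, ?_, ?_⟩
  · have h1 := Int.emod_nonneg n (by omega : a ≠ 0)
    have h2 := Int.mul_ediv_add_emod n a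
    have h3 := Int.emod_lt_of_pos n ha
    have h5 : n / a * a = a * (n / a) := mul_comm _ _
    omega
  · have h1 := Int.emod_nonneg n (by omega : a ≠ 0)
    have h2 := Int.mul_ediv_add_emod n a
    -- a * (n / a) ≤ n
    have h4 : a * (n / a) ≤ n := by omega
    -- want : v.2 ≤ x.2 - (n/a) * b'
    -- have : a*(n/a)*b' ≤ n*b'  and  b'*(v1 - x1 + a - 1) ≤ a*(x2 - v2) - b' (from h)
    nlinarith [mul_le_mul_of_nonneg_right h4 hb, mul_pos ha (lt_of_lt_of_le ha (le_refl a))]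

/-- no stabilizer with both coordinates positive -/
lemma no_pos_stab {A : Om} (hA : A ∈ Yu) {s : ℤ×ℤ} (h1 : 0 < s.1) (h2 : 0 < s.2)
    (hs : transl s A = A) : False := by
  obtain ⟨⟨x0, hx0⟩, ⟨x1, hx1⟩, -⟩ := id hA
  set k : ℤ := (x1.1 - x0.1).natAbs + (x1.2 - x0.2).natAbs with hk
  have hk0 : 0 ≤ k := by positivity
  have h3 : A (x0 + k • s) = true := by rw [periodic_pt hs]; exact hx0
  have hna1 : x1.1 - x0.1 ≤ (x1.1 - x0.1).natAbs := Int.le_natAbs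
  have hna2 : x1.2 - x0.2 ≤ (x1.2 - x0.2).natAbs := Int.le_natAbs
  have hb1 : x1.1 ≤ (x0 + k • s).1 := by
    rw [smul_pair]; simp only [Prod.fst_add]
    nlinarith
  have hb2 : x1.2 ≤ (x0 + k • s).2 := by
    rw [smul_pair]; simp only [Prod.snd_add]
    nlinarith
  have := down hA hb1 hb2 h3
  rw [hx1] at this; exact absurd this (by simp)

lemma strip_aux {A : Om} (hA : A ∈ Yu) {s : ℤ×ℤ}
    (hcase : (0 < s.1 ∧ s.2 ≤ 0) ∨ (s.1 = 0 ∧ 0 < s.2))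
    (hs : transl s A = A) :
    ∃ p q C1 C2 : ℤ, 0 ≤ p ∧ 0 ≤ q ∧ ¬(p = 0 ∧ q = 0) ∧ p * s.1 + q * s.2 = 0 ∧
      (∀ v : ℤ×ℤ, p * v.1 + q * v.2 ≤ C1 → A v = true) ∧
      (∀ v : ℤ×ℤ, A v = true → p * v.1 + q * v.2 ≤ C2) := by
  obtain ⟨⟨x0, hx0⟩, ⟨x1, hx1⟩, -⟩ := id hA
  have hreach : ∀ (p q : ℤ), 0 ≤ p → 0 ≤ q → p * s.1 + q * s.2 = 0 →
      ((0 < s.1 ∧ p = -s.2 ∧ q = s.1) ∨ (s.1 = 0 ∧ 0 < s.2 ∧ p = s.2 ∧ q = 0)) →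
      ∀ x v : ℤ×ℤ, p * v.1 + q * v.2 ≤ p * x.1 + q * x.2 - p * q →
      ∃ k : ℤ, v.1 ≤ (x + k • s).1 ∧ v.2 ≤ (x + k • s).2 := by
    intro p q hp hq hpq hcase2 x v hv
    rcases hcase2 with ⟨ha, rfl, rfl⟩ | ⟨h0, hb, rfl, rfl⟩
    · obtain ⟨k, hk1, hk2⟩ := reach s.1 (-s.2) ha hp x v (by linarith)
      exact ⟨k, by rw [smul_pair]; simpa using hk1, by rw [smul_pair]; simpa using hk2⟩
    · obtain ⟨k, hk1, hk2⟩ := reach s.2 0 hb (le_refl 0) (x.2, x.1) (v.2, v.1) (by simp; nlinarith)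
      refine ⟨k, ?_, ?_⟩
      · rw [smul_pair]; simp [h0]; simpa using hk2
      · rw [smul_pair]; simpa using hk1
  -- choose p q
  obtain ⟨p, q, hp, hq, hne, hpq, hcase2⟩ :
      ∃ p q : ℤ, 0 ≤ p ∧ 0 ≤ q ∧ ¬(p = 0 ∧ q = 0) ∧ p * s.1 + q * s.2 = 0 ∧
        ((0 < s.1 ∧ p = -s.2 ∧ q = s.1) ∨ (s.1 = 0 ∧ 0 < s.2 ∧ p = s.2 ∧ q = 0)) := by
    rcases hcase with ⟨ha, hb⟩ | ⟨ha, hb⟩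
    · exact ⟨-s.2, s.1, by omega, by omega, by omega, by ring, Or.inl ⟨ha, rfl, rfl⟩⟩
    · exact ⟨s.2, 0, by omega, le_refl 0, by omega, by rw [ha]; ring, Or.inr ⟨ha, hb, rfl, rfl⟩⟩
  refine ⟨p, q, p * x0.1 + q * x0.2 - p * q, p * x1.1 + q * x1.2 + p * q - 1, hp, hq, hne, hpq, ?_, ?_⟩
  · intro v hv
    obtain ⟨k, hk1, hk2⟩ := hreach p q hp hq hpq hcase2 x0 v hv
    have h3 : A (x0 + k • s) = true := by rw [periodic_pt hs]; exact hx0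
    exact down hA hk1 hk2 h3
  · intro v hv
    by_contra hcon
    push_neg at hcon
    obtain ⟨k, hk1, hk2⟩ := hreach p q hp hq hpq hcase2 v x1 (by omega)
    have h3 : A (v + k • s) = true := by rw [periodic_pt hs]; exact hv
    have := down hA hk1 hk2 h3
    rw [hx1] at this; exact absurd this (by simp)

lemma strip {A : Om} (hA : A ∈ Yu) {s : ℤ×ℤ} (hs0 : s ≠ 0) (hs : transl s A = A) :
    ∃ p q C1 C2 : ℤ, 0 ≤ p ∧ 0 ≤ q ∧ ¬(p = 0 ∧ q = 0) ∧ p * s.1 + q * s.2 = 0 ∧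
      (∀ v : ℤ×ℤ, p * v.1 + q * v.2 ≤ C1 → A v = true) ∧
      (∀ v : ℤ×ℤ, A v = true → p * v.1 + q * v.2 ≤ C2) := by
  have hsneg : transl (-s) A = A := by
    have := congrArg (transl (-s)) hs
    rw [transl_cancel] at this
    exact this.symm
  have hs0' : ¬(s.1 = 0 ∧ s.2 = 0) := by
    intro ⟨h1, h2⟩; exact hs0 (Prod.ext h1 h2)
  rcases lt_trichotomy s.1 0 with h1 | h1 | h1
  · rcases lt_trichotomy s.2 0 with h2 | h2 | h2
    · exact absurd hsneg (fun h => no_pos_stab hA (by simpa using h1) (by simpa using h2) h |>.elim)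
    · obtain ⟨p,q,C1,C2,h⟩ := strip_aux hA (s := -s) (Or.inl ⟨by simpa using h1, by simp; omega⟩) hsneg
      exact ⟨p, q, C1, C2, h.1, h.2.1, h.2.2.1, by have := h.2.2.2.1; simp at this; linarith, h.2.2.2.2⟩
    · -- s.1 < 0 < s.2 : -s = (pos, neg)
      obtain ⟨p,q,C1,C2,h⟩ := strip_aux hA (s := -s) (Or.inl ⟨by simpa using h1, by simp; omega⟩) hsneg
      exact ⟨p, q, C1, C2, h.1, h.2.1, h.2.2.1, by have := h.2.2.2.1; simp at this; linarith, h.2.2.2.2⟩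
  · rcases lt_trichotomy s.2 0 with h2 | h2 | h2
    · obtain ⟨p,q,C1,C2,h⟩ := strip_aux hA (s := -s) (Or.inr ⟨by simpa using h1, by simpa using h2⟩) hsneg
      exact ⟨p, q, C1, C2, h.1, h.2.1, h.2.2.1, by have := h.2.2.2.1; simp at this; linarith, h.2.2.2.2⟩
    · exact absurd (And.intro h1 h2) hs0'
    · exact strip_aux hA (Or.inr ⟨h1, h2⟩) hs
  · rcases lt_trichotomy s.2 0 with h2 | h2 | h2
    · exact strip_aux hA (Or.inl ⟨h1, by omega⟩) hs
    · exact strip_aux hA (Or.inl ⟨h1, by omega⟩) hs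
    · exact absurd hs (fun h => no_pos_stab hA h1 h2 h |>.elim)




abbrev QT (s : ℤ×ℤ) := (ℤ×ℤ) ⧸ AddSubgroup.zmultiples s

lemma transl_zsmul (A : Om) {s : ℤ×ℤ} (hs : transl s A = A) (k : ℤ) :
    transl (k • s) A = A := by
  funext p
  rw [transl_apply]
  have h := periodic_pt hs k (p - k • s)
  rw [sub_add_cancel] at h
  exact h.symm

lemma quot_rel {s v w : ℤ×ℤ} (h : @Setoid.r _ (QuotientAddGroup.leftRel (AddSubgroup.zmultiples s)) v w) :
    ∃ k : ℤ, w = v + k • s := by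
  rw [QuotientAddGroup.leftRel_apply] at h
  obtain ⟨k, hk⟩ := AddSubgroup.mem_zmultiples_iff.mp h
  refine ⟨k, ?_⟩
  have h2 : v + (-v + w) = w := by abel
  rw [← h2, ← hk]

noncomputable def gq (A : Om) {s : ℤ×ℤ} (hs : transl s A = A) : QT s → Om :=
  fun qq => Quotient.liftOn qq (fun v => transl v A) (by
    intro v w hvw
    obtain ⟨k, rfl⟩ := quot_rel hvw
    rw [← transl_transl, transl_zsmul A hs k])

lemma gq_mk (A : Om) {s : ℤ×ℤ} (hs : transl s A = A) (v : ℤ×ℤ) :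
    gq A hs ((v : ℤ×ℤ) : QT s) = transl v A := rfl

noncomputable def lQ (p q : ℤ) (s : ℤ×ℤ) (hls : p * s.1 + q * s.2 = 0) : QT s → ℤ :=
  fun qq => Quotient.liftOn qq (fun v => p * v.1 + q * v.2) (by
    intro v w hvw
    obtain ⟨k, rfl⟩ := quot_rel hvw
    simp only [smul_pair, Prod.fst_add, Prod.snd_add]
    linear_combination (-k) * hls)

lemma lQ_mk (p q : ℤ) (s : ℤ×ℤ) (hls : p * s.1 + q * s.2 = 0) (v : ℤ×ℤ) :
    lQ p q s hls ((v : ℤ×ℤ) : QT s) = p * v.1 + q * v.2 := rfl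

lemma finite_band {s : ℤ×ℤ} (hs0 : s ≠ 0) (p q : ℤ) (hne : ¬(p = 0 ∧ q = 0))
    (hls : p * s.1 + q * s.2 = 0) (lo hi : ℤ) :
    {qq : QT s | lo ≤ lQ p q s hls qq ∧ lQ p q s hls qq ≤ hi}.Finite := by
  have h' : s.1 ≠ 0 ∨ s.2 ≠ 0 := by
    by_contra hc; push_neg at hc; exact hs0 (Prod.ext hc.1 hc.2)
  have hts : 0 < s.1 * s.1 + s.2 * s.2 := by
    rcases h' with h | h <;>
      nlinarith [mul_self_nonneg s.1, mul_self_nonneg s.2, mul_self_pos.mpr h]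
  set n : ℕ := (s.1 * s.1 + s.2 * s.2).toNat with hn
  have hncast : (n : ℤ) = s.1 * s.1 + s.2 * s.2 := Int.toNat_of_nonneg (le_of_lt hts)
  haveI : NeZero n := ⟨by omega⟩
  set Θ : QT s → ℤ × ZMod n := fun qq => Quotient.liftOn qq
    (fun v => (p * v.1 + q * v.2, ((s.1 * v.1 + s.2 * v.2 : ℤ) : ZMod n)))
    (by
      intro v w hvw
      obtain ⟨k, rfl⟩ := quot_rel hvw
      simp only [smul_pair, Prod.fst_add, Prod.snd_add, Prod.mk.injEq]
      constructor
      · linear_combination (-k) * hls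
      · have h3 : (s.1 * (v.1 + k * s.1) + s.2 * (v.2 + k * s.2) : ℤ)
            = s.1 * v.1 + s.2 * v.2 + k * (n : ℤ) := by rw [hncast]; ring
        rw [h3]
        push_cast
        simp) with hΘ
  have hinj : Function.Injective Θ := by
    intro qq qq' h
    induction qq using QuotientAddGroup.induction_on with
    | H v =>
    induction qq' using QuotientAddGroup.induction_on with
    | H w =>
    simp only [hΘ, Quotient.liftOn_mk, Prod.mk.injEq] at h
    obtain ⟨h1, h2⟩ := h
    rw [ZMod.intCast_eq_intCast_iff] at h2
    obtain ⟨k, hk⟩ := Int.ModEq.dvd h2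
    rw [hncast] at hk
    -- hk : τ w - τ v = (s.1*s.1+s.2*s.2) * k
    have hd1 : p * (w.1 - v.1) + q * (w.2 - v.2) = 0 := by linarith [h1]
    have hd2 : s.1 * (w.1 - v.1) + s.2 * (w.2 - v.2) = k * (s.1 * s.1 + s.2 * s.2) := by
      linarith [hk]
    have hcross : (w.1 - v.1) * s.2 - (w.2 - v.2) * s.1 = 0 := by
      have hcp : p * ((w.1 - v.1) * s.2 - (w.2 - v.2) * s.1) = 0 := by
        linear_combination s.2 * hd1 - (w.2 - v.2) * hls
      have hcq : q * ((w.1 - v.1) * s.2 - (w.2 - v.2) * s.1) = 0 := by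
        linear_combination (w.1 - v.1) * hls - s.1 * hd1
      rcases (not_and_or.mp hne) with hp | hq
      · exact (mul_eq_zero.mp hcp).resolve_left hp
      · exact (mul_eq_zero.mp hcq).resolve_left hq
    have he1 : w.1 - v.1 = k * s.1 := by
      have h4 : (s.1 * s.1 + s.2 * s.2) * ((w.1 - v.1) - k * s.1) = 0 := by
        linear_combination s.1 * hd2 + s.2 * hcross
      have := (mul_eq_zero.mp h4).resolve_left (by omega)
      omega
    have he2 : w.2 - v.2 = k * s.2 := by
      have h4 : (s.1 * s.1 + s.2 * s.2) * ((w.2 - v.2) - k * s.2) = 0 := by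
        linear_combination s.2 * hd2 - s.1 * hcross
      have := (mul_eq_zero.mp h4).resolve_left (by omega)
      omega
    rw [QuotientAddGroup.eq]
    refine AddSubgroup.mem_zmultiples_iff.mpr ⟨k, ?_⟩
    rw [smul_pair]
    ext
    · simp; omega
    · simp; omega
  have hsub : {qq : QT s | lo ≤ lQ p q s hls qq ∧ lQ p q s hls qq ≤ hi} ⊆
      Θ ⁻¹' ((Set.Icc lo hi) ×ˢ (Set.univ : Set (ZMod n))) := by
    intro qq hqq
    induction qq using QuotientAddGroup.induction_on with
    | H v =>
      simp only [Set.mem_preimage, hΘ, Quotient.liftOn_mk, Set.mem_prod, Set.mem_Icc,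
        Set.mem_univ, and_true]
      exact hqq
  exact Set.Finite.subset (((Set.finite_Icc lo hi).prod Set.finite_univ).preimage
    (Function.Injective.injOn hinj)) hsub




lemma stab_ker {A : Om} (hA : A ∈ Yu) {p q C2 : ℤ}
    (hup : ∀ v : ℤ×ℤ, A v = true → p * v.1 + q * v.2 ≤ C2)
    {t : ℤ×ℤ} (ht : transl t A = A) : p * t.1 + q * t.2 = 0 := by
  obtain ⟨⟨x0, hx0⟩, -, -⟩ := id hA
  set L : ℤ := p * t.1 + q * t.2 with hL
  by_contra hne
  have hkey : ∀ k : ℤ, p * x0.1 + q * x0.2 + k * L ≤ C2 := by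
    intro k
    have h1 : A (x0 + k • t) = true := by rw [periodic_pt ht]; exact hx0
    have := hup _ h1
    rw [smul_pair] at this
    simp only [Prod.fst_add, Prod.snd_add] at this
    have h2 : p * (x0.1 + k * t.1) + q * (x0.2 + k * t.2)
        = p * x0.1 + q * x0.2 + k * L := by rw [hL]; ring
    linarith
  set c : ℤ := (C2 - (p * x0.1 + q * x0.2)).natAbs + 1 with hc
  have h2 := hkey (c * L)
  have h3 : 1 ≤ L * L := by nlinarith [mul_self_pos.mpr hne]
  have h4 : C2 - (p * x0.1 + q * x0.2) ≤ (C2 - (p * x0.1 + q * x0.2)).natAbs := Int.le_natAbs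
  nlinarith [h2, h3, h4]

lemma bot_not_mem_Yu : (fun _ => false : Om) ∉ Yu := by
  rintro ⟨⟨v, hv⟩, -, -⟩; simp at hv

lemma top_not_mem_Yu : (fun _ => true : Om) ∉ Yu := by
  rintro ⟨-, ⟨v, hv⟩, -⟩; simp at hv

lemma compact_bound {A : Om} {p q C1 C2 : ℤ}
    (hlo : ∀ v : ℤ×ℤ, p * v.1 + q * v.2 ≤ C1 → A v = true)
    (hup : ∀ v : ℤ×ℤ, A v = true → p * v.1 + q * v.2 ≤ C2)
    {K : Set Om} (hK : IsCompact K) (hKYu : K ⊆ Yu) :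
    ∃ lo hi : ℤ, ∀ v : ℤ×ℤ, transl v A ∈ K →
      lo ≤ p * v.1 + q * v.2 ∧ p * v.1 + q * v.2 ≤ hi := by
  have hclosed : IsClosed K := hK.isClosed
  have hhi : ∃ hi : ℤ, ∀ v : ℤ×ℤ, transl v A ∈ K → p * v.1 + q * v.2 ≤ hi := by
    by_contra hc
    push_neg at hc
    have htop : (fun _ => true : Om) ∈ K := by
      rw [← hclosed.closure_eq, _root_.mem_closure_iff]
      intro O hO hmem
      obtain ⟨I, u, hu, hsub⟩ := isOpen_pi_iff.mp hO _ hmem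
      obtain ⟨v, hvK, hv⟩ := hc (↑(I.sup (fun w => (p * w.1 + q * w.2 - C1).toNat)))
      refine ⟨transl v A, hsub ?_, hvK⟩
      intro w hw
      have h1 : p * w.1 + q * w.2 - C1 ≤ (↑(I.sup (fun w => (p * w.1 + q * w.2 - C1).toNat)) : ℤ) :=
        le_trans (Int.self_le_toNat _) (by exact_mod_cast Finset.le_sup (f := fun w => (p * w.1 + q * w.2 - C1).toNat) hw)
      have h2 : transl v A w = true := by
        rw [transl_apply]
        exact hlo (w - v) (by simp only [Prod.fst_sub, Prod.snd_sub]; linarith)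
      rw [h2]
      exact (hu w hw).2
    exact top_not_mem_Yu (hKYu htop)
  have hlo' : ∃ lo : ℤ, ∀ v : ℤ×ℤ, transl v A ∈ K → lo ≤ p * v.1 + q * v.2 := by
    by_contra hc
    push_neg at hc
    have hbot : (fun _ => false : Om) ∈ K := by
      rw [← hclosed.closure_eq, _root_.mem_closure_iff]
      intro O hO hmem
      obtain ⟨I, u, hu, hsub⟩ := isOpen_pi_iff.mp hO _ hmem
      obtain ⟨v, hvK, hv⟩ := hc (-(↑(I.sup (fun w => (C2 - (p * w.1 + q * w.2)).toNat))))
      refine ⟨transl v A, hsub ?_, hvK⟩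
      intro w hw
      have h1 : C2 - (p * w.1 + q * w.2) ≤ (↑(I.sup (fun w => (C2 - (p * w.1 + q * w.2)).toNat)) : ℤ) :=
        le_trans (Int.self_le_toNat _) (by exact_mod_cast Finset.le_sup (f := fun w => (C2 - (p * w.1 + q * w.2)).toNat) hw)
      have h2 : transl v A w = false := by
        rw [transl_apply]
        by_contra hcon
        rw [Bool.not_eq_false] at hcon
        have := hup (w - v) hcon
        simp only [Prod.fst_sub, Prod.snd_sub] at this
        linarith
      rw [h2]
      exact (hu w hw).2
    exact bot_not_mem_Yu (hKYu hbot)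
  obtain ⟨hi, h1⟩ := hhi
  obtain ⟨lo, h2⟩ := hlo'
  exact ⟨lo, hi, fun v hv => ⟨h2 v hv, h1 v hv⟩⟩




lemma cHom_add (θ : ℝ) (u v : ℤ×ℤ) : cHom θ (u + v) = cHom θ u + cHom θ v := by
  simp only [cHom, Prod.fst_add, Prod.snd_add]
  push_cast
  ring

noncomputable def e2fun (θ β : ℝ) {s : ℤ×ℤ} (hβcs : β * cHom θ s = 0) : QT s → ℝ :=
  fun qq => Quotient.liftOn qq (fun v => Real.exp (β * cHom θ v / 2)) (by
    intro v w hvw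
    obtain ⟨k, rfl⟩ := quot_rel hvw
    congr 1
    have hc : cHom θ (v + k • s) = cHom θ v + (k : ℝ) * cHom θ s := by
      rw [smul_pair]
      simp only [cHom, Prod.fst_add, Prod.snd_add]
      push_cast
      ring
    rw [hc]
    have h2 : β * (cHom θ v + (k:ℝ) * cHom θ s) = β * cHom θ v + (k:ℝ) * (β * cHom θ s) := by ring
    rw [h2, hβcs]
    ring)

lemma e2fun_mk (θ β : ℝ) {s : ℤ×ℤ} (hβcs : β * cHom θ s = 0) (v : ℤ×ℤ) :
    e2fun θ β hβcs ((v : ℤ×ℤ) : QT s) = Real.exp (β * cHom θ v / 2) := rfl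

lemma e2fun_pos (θ β : ℝ) {s : ℤ×ℤ} (hβcs : β * cHom θ s = 0) (qq : QT s) :
    0 < e2fun θ β hβcs qq := by
  induction qq using QuotientAddGroup.induction_on with
  | H v => exact Real.exp_pos _

lemma e2fun_add_mk (θ β : ℝ) {s : ℤ×ℤ} (hβcs : β * cHom θ s = 0) (qq : QT s) (a : ℤ×ℤ) :
    e2fun θ β hβcs (qq + ((a : ℤ×ℤ) : QT s)) = Real.exp (β * cHom θ a / 2) * e2fun θ β hβcs qq := by
  induction qq using QuotientAddGroup.induction_on with
  | H v =>
    have h1 : ((v : ℤ×ℤ) : QT s) + ((a : ℤ×ℤ) : QT s) = ((v + a : ℤ×ℤ) : QT s) := rfl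
    rw [h1, e2fun_mk, e2fun_mk]
    have h2 : β * cHom θ (v + a) / 2 = β * cHom θ a / 2 + β * cHom θ v / 2 := by
      rw [cHom_add]; ring
    rw [h2, Real.exp_add]

lemma gq_sub (A : Om) {s : ℤ×ℤ} (hs : transl s A = A) (qq : QT s) (u : ℤ×ℤ) :
    transl (-u) (gq A hs qq) = gq A hs (qq - ((u : ℤ×ℤ) : QT s)) := by
  induction qq using QuotientAddGroup.induction_on with
  | H v =>
    have h1 : ((v : ℤ×ℤ) : QT s) - ((u : ℤ×ℤ) : QT s) = ((v - u : ℤ×ℤ) : QT s) := rfl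
    rw [h1, gq_mk, gq_mk, transl_transl]
    have h2 : -u + v = v - u := by abel
    rw [h2]

lemma gq_mem_orbit (A : Om) {s : ℤ×ℤ} (hs : transl s A = A) (qq : QT s) :
    gq A hs qq ∈ orbit A := by
  induction qq using QuotientAddGroup.induction_on with
  | H v => exact ⟨v, (gq_mk A hs v).symm⟩

lemma eq_transl_stab {A : Om} {v w : ℤ×ℤ} (h : transl w A = transl v A) :
    transl (w - v) A = A := by
  have h2 := congrArg (transl (-v)) h
  rw [transl_cancel, transl_transl] at h2
  have h3 : -v + w = w - v := by abel
  rwa [h3] at h2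



theorem stmt18 (θ : ℝ) (hθ : 0 < θ) (β : ℝ)
    (μ : Measure ((ℤ × ℤ) → Bool))
    (hμ0 : μ ≠ 0) (hconc : ConcYu μ) (hRadon : IsRadonYu μ)
    (hconf : IsConformal (cHom θ) β μ) (herg : IsErgodicZ2 μ)
    (A : (ℤ × ℤ) → Bool) (hA : A ∈ Yu) (horb : μ ((orbit A)ᶜ) = 0)
    (hstab : ∃ v : ℤ × ℤ, v ≠ 0 ∧ transl v A = A) :
    -- there is a nonzero ℤ²-invariant Radon measure on Y_u mutually absolutely
    -- continuous with μ:
    (∃ ν : Measure ((ℤ × ℤ) → Bool), ν ≠ 0 ∧ ConcYu ν ∧ IsRadonYu ν ∧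
      IsInvariant ν ∧ ν ≪ μ ∧ μ ≪ ν) ∧
    -- equivalently, V^{μ} is 1-conformal:
    (∃ φ : ((ℤ × ℤ) → Bool) → ℂ, Measurable φ ∧ ¬ (φ =ᵐ[μ.restrict Xu] 0) ∧
      (∀ a ∈ Pnn, ∫⁻ B in Xu \ XuAdd a, (‖φ B‖₊ : ℝ≥0∞) ^ 2 ∂μ < ⊤) ∧
      (∀ a ∈ Pnn, ∀ᵐ B ∂(μ.restrict Xu),
        φ (transl a B) = (Real.exp (β * cHom θ a / 2) : ℂ) * φ B)) := by
  classical
  obtain ⟨s, hs0, hs⟩ := hstab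
  obtain ⟨p, q, C1, C2, hp, hq, hne, hls, hlo, hup⟩ := strip hA hs0 hs
  haveI : Countable (QT s) := Quotient.countable
  set g : QT s → Om := gq A hs with hg
  set L : QT s → ℤ := lQ p q s hls with hL
  -- basic orbit facts
  have horbpt : ∀ v : ℤ×ℤ, transl v A ∈ Yu := mem_Yu_transl hA
  have hμsingfin : ∀ v : ℤ×ℤ, μ {transl v A} < ⊤ := fun v =>
    hRadon {transl v A} isCompact_singleton (by simpa [Set.singleton_subset_iff] using horbpt v)
  have hconfsing : ∀ u v : ℤ×ℤ, μ {transl (u + v) A}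
      = ENNReal.ofReal (Real.exp (-(β * cHom θ u))) * μ {transl v A} := by
    intro u v
    have h := hconf u {transl v A} (measurableSet_singleton _)
    rwa [Set.image_singleton, transl_transl] at h
  have hpos0 : ∃ v0 : ℤ×ℤ, μ {transl v0 A} ≠ 0 := by
    by_contra hc
    push_neg at hc
    have h1 : μ (orbit A) = 0 := by
      rw [orbit_eq_range]
      have h2 : Set.range (fun v : ℤ×ℤ => transl v A) = ⋃ v : ℤ×ℤ, {transl v A} := by
        ext B; simp [eq_comm]
      rw [h2]
      exact measure_iUnion_null (fun v => hc v)
    have h3 : μ Set.univ = 0 := by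
      have h4 := measure_union_le (μ := μ) (orbit A) ((orbit A)ᶜ)
      rw [Set.union_compl_self, h1, horb] at h4
      simpa using h4
    exact hμ0 (Measure.measure_univ_eq_zero.mp h3)
  obtain ⟨v0, hv0⟩ := hpos0
  have hposall : ∀ v : ℤ×ℤ, μ {transl v A} ≠ 0 := by
    intro v
    have h := hconfsing (v - v0) v0
    rw [sub_add_cancel] at h
    rw [h]
    exact mul_ne_zero (ENNReal.ofReal_pos.mpr (Real.exp_pos _)).ne' hv0
  have hβcs : β * cHom θ s = 0 := by
    have h := hconfsing s v0
    have heq : transl (s + v0) A = transl v0 A := by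
      rw [add_comm, ← transl_transl, hs]
    rw [heq] at h
    have h2 : ENNReal.ofReal (Real.exp (-(β * cHom θ s))) * μ {transl v0 A}
        = 1 * μ {transl v0 A} := by rw [one_mul, ← h]
    have h3 := (ENNReal.mul_left_inj hv0 (hμsingfin v0).ne).mp h2
    have h4 := ENNReal.ofReal_eq_one.mp h3
    have h5 := (Real.exp_eq_one_iff _).mp h4
    linarith
  have hker : ∀ t : ℤ×ℤ, transl t A = A → p * t.1 + q * t.2 = 0 :=
    fun t ht => stab_ker hA hup ht
  -- value of lQ on points equal to a given translate
  have hfibL : ∀ (v : ℤ×ℤ) (qq : QT s), g qq = transl v A → L qq = p * v.1 + q * v.2 := by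
    intro v qq
    induction qq using QuotientAddGroup.induction_on with
    | H w =>
      intro hgw
      rw [hg, gq_mk] at hgw
      have h1 := hker _ (eq_transl_stab hgw)
      rw [hL, lQ_mk]
      simp only [Prod.fst_sub, Prod.snd_sub] at h1
      linarith
  -- the invariant measure
  set ν : Measure Om := Measure.sum (fun qq : QT s => Measure.dirac (g qq)) with hν
  have hν_apply : ∀ E : Set Om, MeasurableSet E →
      ν E = ∑' qq : QT s, Set.indicator E (fun _ => (1:ℝ≥0∞)) (g qq) := by
    intro E hE
    rw [hν, Measure.sum_apply _ hE]
    congr 1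
    funext qq
    exact Measure.dirac_apply' (g qq) hE
  have hν_pt : ∀ v : ℤ×ℤ, (1:ℝ≥0∞) ≤ ν {transl v A} := by
    intro v
    rw [hν_apply _ (measurableSet_singleton _)]
    have h1 : Set.indicator {transl v A} (fun _ => (1:ℝ≥0∞)) (g ((v : ℤ×ℤ) : QT s)) = 1 := by
      rw [hg, gq_mk]
      simp
    calc (1:ℝ≥0∞) = Set.indicator {transl v A} (fun _ => (1:ℝ≥0∞)) (g ((v : ℤ×ℤ) : QT s)) := h1.symm
      _ ≤ _ := ENNReal.le_tsum (f := fun qq : QT s =>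
        Set.indicator {transl v A} (fun _ => (1:ℝ≥0∞)) (g qq)) ((v : ℤ×ℤ) : QT s)
  have hνne : ν ≠ 0 := by
    intro hz
    have h1 := hν_pt 0
    rw [transl_zero, hz] at h1
    simp only [Measure.coe_zero, Pi.zero_apply, nonpos_iff_eq_zero] at h1
    exact one_ne_zero h1
  have hνconc : ConcYu ν := by
    rw [ConcYu, hν_apply _ measurableSet_Yu.compl]
    have h1 : ∀ qq : QT s, Set.indicator Yuᶜ (fun _ => (1:ℝ≥0∞)) (g qq) = 0 := by
      intro qq
      induction qq using QuotientAddGroup.induction_on with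
      | H v =>
        rw [hg, gq_mk]
        exact Set.indicator_of_notMem (by simp [horbpt v]) _
    simp [h1]
  have hνRadon : IsRadonYu ν := by
    intro K hK hKYu
    obtain ⟨lo, hi, hbd⟩ := compact_bound hlo hup hK hKYu
    have hKmeas : MeasurableSet K := hK.isClosed.measurableSet
    rw [hν_apply _ hKmeas]
    have hfin := finite_band hs0 p q hne hls lo hi
    have hsupp : ∀ qq : QT s, qq ∉ hfin.toFinset →
        Set.indicator K (fun _ => (1:ℝ≥0∞)) (g qq) = 0 := by
      intro qq hqq
      by_contra hcon
      have hmem : g qq ∈ K := by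
        by_contra hK2
        exact hcon (Set.indicator_of_notMem hK2 _)
      apply hqq
      rw [Set.Finite.mem_toFinset]
      revert hmem
      induction qq using QuotientAddGroup.induction_on with
      | H v =>
        intro hmem
        rw [hg, gq_mk] at hmem
        have hb := hbd v hmem
        simp only [Set.mem_setOf_eq, lQ_mk]
        exact hb
    rw [tsum_eq_sum hsupp]
    refine ENNReal.sum_lt_top.mpr (fun qq _ => ?_)
    calc Set.indicator K (fun _ => (1:ℝ≥0∞)) (g qq) ≤ 1 := Set.indicator_le_self' (by simp) _
      _ < ⊤ := by simp
  have hνinv : IsInvariant ν := by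
    intro u E hE
    rw [image_transl, hν_apply _ ((measurable_transl (-u)) hE), hν_apply E hE]
    have h1 : ∀ qq : QT s, Set.indicator (transl (-u) ⁻¹' E) (fun _ => (1:ℝ≥0∞)) (g qq)
        = Set.indicator E (fun _ => (1:ℝ≥0∞)) (g (qq - ((u : ℤ×ℤ) : QT s))) := by
      intro qq
      simp only [hg]
      rw [← gq_sub A hs qq u]
      simp [Set.indicator_apply, Set.mem_preimage]
    rw [tsum_congr h1]
    exact (Equiv.subRight ((u : ℤ×ℤ) : QT s)).tsum_eq
      (fun qq => Set.indicator E (fun _ => (1:ℝ≥0∞)) (g qq))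
  have hνμ : ν ≪ μ := by
    intro E hE
    have hE' : μ (toMeasurable μ E) = 0 := by rw [measure_toMeasurable]; exact hE
    have hν' : ν (toMeasurable μ E) = 0 := by
      rw [hν_apply _ (measurableSet_toMeasurable μ E)]
      have h1 : ∀ qq : QT s, Set.indicator (toMeasurable μ E) (fun _ => (1:ℝ≥0∞)) (g qq) = 0 := by
        intro qq
        induction qq using QuotientAddGroup.induction_on with
        | H v =>
          rw [hg, gq_mk]
          refine Set.indicator_of_notMem (fun hmem => ?_) _
          have h2 : μ {transl v A} ≤ μ (toMeasurable μ E) :=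
            measure_mono (Set.singleton_subset_iff.mpr hmem)
          rw [hE'] at h2
          exact hposall v (le_antisymm h2 zero_le)
      simp [h1]
    exact measure_mono_null (subset_toMeasurable μ E) hν'
  have hμν : μ ≪ ν := by
    intro E hE
    have hν' : ν (toMeasurable ν E) = 0 := by rw [measure_toMeasurable]; exact hE
    have hdisj : toMeasurable ν E ⊆ (orbit A)ᶜ := by
      intro B hB
      rintro ⟨v, rfl⟩
      have h1 : (1:ℝ≥0∞) ≤ ν (toMeasurable ν E) := by
        calc (1:ℝ≥0∞) ≤ ν {transl v A} := hν_pt v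
          _ ≤ ν (toMeasurable ν E) := measure_mono (Set.singleton_subset_iff.mpr hB)
      rw [hν'] at h1
      simp at h1
    refine le_antisymm ?_ zero_le
    calc μ E ≤ μ (toMeasurable ν E) := measure_mono (subset_toMeasurable ν E)
      _ ≤ μ ((orbit A)ᶜ) := measure_mono hdisj
      _ = 0 := horb
  refine ⟨⟨ν, hνne, hνconc, hνRadon, hνinv, hνμ, hμν⟩, ?_⟩
  -- === the 1-conformal vector ===
  set e2 : QT s → ℝ := e2fun θ β hβcs with he2
  set φ0 : Om → ℝ≥0∞ := fun B => ∑' qq : QT s,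
      Set.indicator {g qq} (fun _ => ENNReal.ofReal (e2 qq)) B with hφ0
  have hφ0meas : Measurable φ0 :=
    Measurable.ennreal_tsum (fun qq =>
      (measurable_const.indicator (measurableSet_singleton (g qq))))
  set φ : Om → ℂ := fun B => ((φ0 B).toReal : ℂ) with hφ
  have hφmeas : Measurable φ :=
    Complex.measurable_ofReal.comp (hφ0meas.ennreal_toReal)
  have hcov0 : ∀ (a : ℤ×ℤ) (B : Om), φ0 (transl a B)
      = ENNReal.ofReal (Real.exp (β * cHom θ a / 2)) * φ0 B := by
    intro a B
    have hterm : ∀ qq : QT s,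
        Set.indicator {g qq} (fun _ => ENNReal.ofReal (e2 qq)) (transl a B)
        = ENNReal.ofReal (Real.exp (β * cHom θ a / 2)) *
          Set.indicator {g (qq - ((a:ℤ×ℤ) : QT s))}
            (fun _ => ENNReal.ofReal (e2 (qq - ((a:ℤ×ℤ) : QT s)))) B := by
      intro qq
      have hmem : transl a B ∈ ({g qq} : Set Om)
          ↔ B ∈ ({g (qq - ((a:ℤ×ℤ):QT s))} : Set Om) := by
        simp only [Set.mem_singleton_iff, hg]
        constructor
        · intro h
          rw [← gq_sub A hs qq a, ← h, transl_cancel]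
        · intro h
          rw [h, ← gq_sub A hs qq a, transl_cancel']
      have hval : e2 qq = Real.exp (β * cHom θ a / 2) * e2 (qq - ((a:ℤ×ℤ):QT s)) := by
        have h3 := e2fun_add_mk θ β hβcs (qq - ((a:ℤ×ℤ):QT s)) a
        rw [sub_add_cancel] at h3
        rw [he2]
        exact h3
      by_cases hb : B ∈ ({g (qq - ((a:ℤ×ℤ):QT s))} : Set Om)
      · rw [Set.indicator_of_mem hb, Set.indicator_of_mem (hmem.mpr hb), hval,
          ENNReal.ofReal_mul (Real.exp_nonneg _)]
      · rw [Set.indicator_of_notMem hb,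
          Set.indicator_of_notMem (fun hc => hb (hmem.mp hc)), mul_zero]
    rw [hφ0]
    simp only
    rw [tsum_congr hterm, ENNReal.tsum_mul_left]
    congr 1
    exact (Equiv.subRight ((a:ℤ×ℤ) : QT s)).tsum_eq
      (fun qq => Set.indicator {g qq} (fun _ => ENNReal.ofReal (e2 qq)) B)
  have hφ0lb : ∀ v : ℤ×ℤ, ENNReal.ofReal (e2 ((v:ℤ×ℤ) : QT s)) ≤ φ0 (transl v A) := by
    intro v
    have h1 : Set.indicator {g ((v:ℤ×ℤ):QT s)}
        (fun _ => ENNReal.ofReal (e2 ((v:ℤ×ℤ):QT s))) (transl v A)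
        = ENNReal.ofReal (e2 ((v:ℤ×ℤ):QT s)) :=
      Set.indicator_of_mem (by rw [Set.mem_singleton_iff, hg, gq_mk]) _
    rw [hφ0]
    simp only
    rw [← h1]
    exact ENNReal.le_tsum (f := fun qq : QT s =>
      Set.indicator {g qq} (fun _ => ENNReal.ofReal (e2 qq)) (transl v A)) ((v:ℤ×ℤ) : QT s)
  have hφ0fin : ∀ v : ℤ×ℤ, φ0 (transl v A) ≠ ⊤ := by
    intro v
    have hfin := finite_band hs0 p q hne hls (p*v.1+q*v.2) (p*v.1+q*v.2)
    have hsupp : ∀ qq ∉ hfin.toFinset,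
        Set.indicator {g qq} (fun _ => ENNReal.ofReal (e2 qq)) (transl v A) = 0 := by
      intro qq hqq
      refine Set.indicator_of_notMem (fun hmem => ?_) _
      rw [Set.mem_singleton_iff] at hmem
      have h2 := hfibL v qq hmem.symm
      rw [hL] at h2
      apply hqq
      rw [Set.Finite.mem_toFinset]
      exact ⟨le_of_eq h2.symm, le_of_eq h2⟩
    rw [hφ0]
    simp only
    rw [tsum_eq_sum hsupp]
    refine (ENNReal.sum_lt_top.mpr (fun qq _ => ?_)).ne
    by_cases hmem : transl v A ∈ ({g qq} : Set Om)
    · rw [Set.indicator_of_mem hmem]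
      exact ENNReal.ofReal_lt_top
    · rw [Set.indicator_of_notMem hmem]
      simp
  have hφ0pos : ∀ v : ℤ×ℤ, φ0 (transl v A) ≠ 0 := by
    intro v
    have h2 : (0:ℝ≥0∞) < ENNReal.ofReal (e2 ((v:ℤ×ℤ):QT s)) :=
      ENNReal.ofReal_pos.mpr (by rw [he2]; exact e2fun_pos θ β hβcs _)
    exact (lt_of_lt_of_le h2 (hφ0lb v)).ne'
  refine ⟨φ, hφmeas, ?_, ?_, ?_⟩
  · -- not a.e. zero
    intro haez
    obtain ⟨vstar, hvstar⟩ := hA.1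
    have hB0Xu : transl (-vstar) A ∈ Xu := by
      refine ⟨horbpt _, ?_⟩
      rw [transl_apply]
      simpa using hvstar
    have hφB0 : φ (transl (-vstar) A) ≠ 0 := by
      rw [hφ]
      simp only [ne_eq, Complex.ofReal_eq_zero]
      exact ENNReal.toReal_ne_zero.mpr ⟨hφ0pos (-vstar), hφ0fin (-vstar)⟩
    have hnull : (μ.restrict Xu) {x | ¬ φ x = 0} = 0 := by
      have h5 := ae_iff.mp haez
      simpa using h5
    have hle : (μ.restrict Xu) {transl (-vstar) A} ≤ (μ.restrict Xu) {x | ¬ φ x = 0} := by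
      apply measure_mono
      intro B hBmem
      rw [Set.mem_singleton_iff] at hBmem
      rw [hBmem]
      exact hφB0
    rw [hnull, Measure.restrict_apply (measurableSet_singleton _),
      Set.inter_eq_self_of_subset_left (Set.singleton_subset_iff.mpr hB0Xu)] at hle
    exact hposall (-vstar) (le_antisymm hle zero_le)
  · -- square integrability
    intro a ha
    have hwin : ∀ v : ℤ×ℤ, transl v A ∈ Xu \ XuAdd a →
        -C2 ≤ p*v.1+q*v.2 ∧ p*v.1+q*v.2 ≤ (p*a.1+q*a.2) - C1 - 1 := by
      intro v hv
      obtain ⟨⟨hYuv, h0⟩, hnot⟩ := hv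
      constructor
      · have h1 : A (-v) = true := by
          rw [transl_apply] at h0
          simpa using h0
        have h2 := hup _ h1
        simp only [Prod.fst_neg, Prod.snd_neg] at h2
        linarith
      · have h3 : ¬ (transl v A) a = true := fun hc => hnot ((mem_XuAdd_iff hYuv).mpr hc)
        rw [transl_apply] at h3
        have h4 : ¬ (p*(a-v).1 + q*(a-v).2 ≤ C1) := fun hc => h3 (hlo _ hc)
        simp only [Prod.fst_sub, Prod.snd_sub] at h4
        push_neg at h4
        have h5 : p*(a.1-v.1)+q*(a.2-v.2) = (p*a.1+q*a.2) - (p*v.1+q*v.2) := by ring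
        omega
    have hfinset : {qq : QT s | g qq ∈ Xu \ XuAdd a}.Finite := by
      refine (finite_band hs0 p q hne hls (-C2) ((p*a.1+q*a.2) - C1 - 1)).subset ?_
      intro qq hqq
      induction qq using QuotientAddGroup.induction_on with
      | H v =>
        rw [Set.mem_setOf_eq, hg, gq_mk] at hqq
        have h6 := hwin v hqq
        simpa [Set.mem_setOf_eq, lQ_mk] using h6
    have hSorb : (Xu \ XuAdd a) ∩ orbit A = g '' {qq | g qq ∈ Xu \ XuAdd a} := by
      ext B
      constructor
      · rintro ⟨hBS, v, rfl⟩
        exact ⟨((v:ℤ×ℤ) : QT s), by rwa [Set.mem_setOf_eq, hg, gq_mk], by rw [hg, gq_mk]⟩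
      · rintro ⟨qq, hqq, rfl⟩
        exact ⟨hqq, gq_mem_orbit A hs qq⟩
    have haes : ((Xu \ XuAdd a : Set Om)) =ᵐ[μ] (((Xu \ XuAdd a) ∩ orbit A : Set Om)) := by
      rw [MeasureTheory.ae_eq_set]
      constructor
      · refine measure_mono_null ?_ horb
        intro B hB
        simp only [Set.mem_diff, Set.mem_inter_iff, Set.mem_compl_iff] at hB ⊢
        exact fun hc => hB.2 ⟨hB.1, hc⟩
      · have he : ((Xu \ XuAdd a) ∩ orbit A) \ (Xu \ XuAdd a) = (∅ : Set Om) :=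
          Set.diff_eq_empty.mpr Set.inter_subset_left
        rw [he]
        exact measure_empty
    have hres : μ.restrict (Xu \ XuAdd a) = μ.restrict ((hfinset.image g).toFinset : Set Om) := by
      rw [Measure.restrict_congr_set haes]
      congr 1
      rw [Set.Finite.coe_toFinset]
      exact hSorb
    rw [hres, lintegral_finset]
    refine ENNReal.sum_lt_top.mpr (fun B hB => ?_)
    have hBfin : μ {B} < ⊤ := by
      rw [Set.Finite.mem_toFinset] at hB
      obtain ⟨qq, hqq, rfl⟩ := hB
      induction qq using QuotientAddGroup.induction_on with
      | H v =>
        rw [hg, gq_mk]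
        exact hμsingfin v
    exact ENNReal.mul_lt_top (ENNReal.pow_lt_top ENNReal.coe_lt_top) hBfin
  · -- covariance
    intro a ha
    refine Filter.Eventually.of_forall (fun B => ?_)
    rw [hφ]
    simp only
    rw [hcov0 a B]
    by_cases htop : φ0 B = ⊤
    · rw [htop, ENNReal.mul_top (ENNReal.ofReal_pos.mpr (Real.exp_pos _)).ne']
      simp
    · rw [ENNReal.toReal_mul, ENNReal.toReal_ofReal (Real.exp_nonneg _)]
      push_cast
      ring



end Stmt18
end
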